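/- arXiv:math/9801020 — 9 statements merged into one kernel-verified Lean document; each statement's English description precedes it below -/
import Mathlib

section
/- Let k be a commutative ring (or field), n a natural number, and c : Fin n → Fin n → Fin n → k an arbitrary family of scalars (c i j k written c_{ij}^k). Let F be the free associative k-algebra on generators t^i_j (i,j ∈ Fin n), and let I be the two-sided ideal of F generated by the elements (Σ_a c_{ij}^a t^k_a) − (Σ_{a,b} c_{ab}^k t^a_i t^b_j) for all i,j,k. Let Δ : F → F ⊗ F and ε : F → k be the unique k-algebra homomorphisms with Δ(t^i_j) = Σ_a t^i_a ⊗ t^a_j and ε(t^i_j) = δ_{ij}. Then Δ(I) ⊆ I ⊗ F + F ⊗ I and ε(I) = 0, so Δ and ε descend to the quotient F/I, making F/I a k-bialgebra (the comeasuring bialgebra M₁(A)) whose coproduct and counit on the images of the generators are the matrix coalgebra Δ(t^i_j) = Σ_a t^i_a ⊗ t^a_j, ε(t^i_j) = δ_{ij}. -/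
open scoped TensorProduct

noncomputable section
namespace Stmt0

variable (K : Type*) [CommRing K] (n : ℕ) (c : Fin n → Fin n → Fin n → K)

/-- The free algebra on the matrix of generators `t^i_j`. -/
abbrev F : Type _ := FreeAlgebra K (Fin n × Fin n)

/-- The generator `t^i_j`. -/
def t (i j : Fin n) : F K n := FreeAlgebra.ι K (i, j)

/-- Left-hand side `Σ_a c_{ij}^a t^k_a` of the comeasuring relation. -/
def relLHS (i j k : Fin n) : F K n := ∑ a, c i j a • t K n k a

/-- Right-hand side `Σ_{a,b} c_{ab}^k t^a_i t^b_j` of the comeasuring relation. -/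
def relRHS (i j k : Fin n) : F K n := ∑ a, ∑ b, c a b k • (t K n a i * t K n b j)

/-- The two-sided ideal `I` generated by the comeasuring relations. -/
def I : TwoSidedIdeal (F K n) :=
  TwoSidedIdeal.span {x | ∃ i j k, x = relLHS K n c i j k - relRHS K n c i j k}

/-- The coproduct on the free algebra: the unique algebra map with
`Δ(t^i_j) = Σ_a t^i_a ⊗ t^a_j`. -/
def Δ : F K n →ₐ[K] F K n ⊗[K] F K n :=
  FreeAlgebra.lift K (fun p => ∑ a, t K n p.1 a ⊗ₜ[K] t K n a p.2)

/-- The counit on the free algebra: the unique algebra map with `ε(t^i_j) = δ_{ij}`. -/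
def ε : F K n →ₐ[K] K :=
  FreeAlgebra.lift K (fun p => if p.1 = p.2 then (1 : K) else 0)

/-- The subspace `I ⊗ F + F ⊗ I` of `F ⊗ F`. -/
def J : Submodule K (F K n ⊗[K] F K n) :=
  Submodule.span K
    ({z | ∃ x ∈ I K n c, ∃ y, z = x ⊗ₜ[K] y} ∪ {z | ∃ x, ∃ y ∈ I K n c, z = x ⊗ₜ[K] y})

/-- The relation whose `RingQuot` is the quotient `F/I`. -/
def rel : F K n → F K n → Prop :=
  fun x y => ∃ i j k, x = relLHS K n c i j k ∧ y = relRHS K n c i j k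

/-- The comeasuring bialgebra `M₁(A) = F/I`. -/
abbrev M : Type _ := RingQuot (rel K n c)

/-- The quotient map `F → F/I`. -/
def mk : F K n →ₐ[K] M K n c := RingQuot.mkAlgHom K (rel K n c)

-- AUX START
lemma Δ_t (i j : Fin n) :
    Δ K n (t K n i j) = ∑ a, t K n i a ⊗ₜ[K] t K n a j := by
  simp [Δ, t]

lemma ε_t (i j : Fin n) :
    ε K n (t K n i j) = if i = j then (1 : K) else 0 := by
  simp [ε, t]

lemma gen_mem_I (i j k : Fin n) :
    relLHS K n c i j k - relRHS K n c i j k ∈ I K n c :=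
  TwoSidedIdeal.subset_span ⟨i, j, k, rfl⟩

lemma mk_rel (i j k : Fin n) :
    mk K n c (relLHS K n c i j k) = mk K n c (relRHS K n c i j k) :=
  RingQuot.mkAlgHom_rel K ⟨i, j, k, rfl, rfl⟩

lemma tmul_mem_J_left {x : F K n} (hx : x ∈ I K n c) (y : F K n) :
    x ⊗ₜ[K] y ∈ J K n c :=
  Submodule.subset_span (Or.inl ⟨x, hx, y, rfl⟩)

lemma tmul_mem_J_right (x : F K n) {y : F K n} (hy : y ∈ I K n c) :
    x ⊗ₜ[K] y ∈ J K n c :=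
  Submodule.subset_span (Or.inr ⟨x, y, hy, rfl⟩)

lemma J_mul_left (w : F K n ⊗[K] F K n) {z : F K n ⊗[K] F K n} (hz : z ∈ J K n c) :
    w * z ∈ J K n c := by
  induction hz using Submodule.span_induction with
  | mem z hz =>
      obtain (⟨x, hx, y, rfl⟩ | ⟨x, y, hy, rfl⟩) := hz <;>
      · induction w using TensorProduct.induction_on with
        | zero => simpa using Submodule.zero_mem _
        | tmul u v =>
            rw [Algebra.TensorProduct.tmul_mul_tmul]
            first
            | exact tmul_mem_J_left K n c ((I K n c).mul_mem_left u x hx) _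
            | exact tmul_mem_J_right K n c _ ((I K n c).mul_mem_left v y hy)
        | add w1 w2 h1 h2 => rw [add_mul]; exact Submodule.add_mem _ h1 h2
  | zero => simpa using Submodule.zero_mem _
  | add a b _ _ ha hb => rw [mul_add]; exact Submodule.add_mem _ ha hb
  | smul r a _ ha => rw [mul_smul_comm]; exact Submodule.smul_mem _ r ha

lemma J_mul_right (w : F K n ⊗[K] F K n) {z : F K n ⊗[K] F K n} (hz : z ∈ J K n c) :
    z * w ∈ J K n c := by
  induction hz using Submodule.span_induction with
  | mem z hz =>
      obtain (⟨x, hx, y, rfl⟩ | ⟨x, y, hy, rfl⟩) := hz <;>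
      · induction w using TensorProduct.induction_on with
        | zero => simpa using Submodule.zero_mem _
        | tmul u v =>
            rw [Algebra.TensorProduct.tmul_mul_tmul]
            first
            | exact tmul_mem_J_left K n c ((I K n c).mul_mem_right x u hx) _
            | exact tmul_mem_J_right K n c _ ((I K n c).mul_mem_right y v hy)
        | add w1 w2 h1 h2 => rw [mul_add]; exact Submodule.add_mem _ h1 h2
  | zero => simpa using Submodule.zero_mem _
  | add a b _ _ ha hb => rw [add_mul]; exact Submodule.add_mem _ ha hb
  | smul r a _ ha => rw [smul_mul_assoc]; exact Submodule.smul_mem _ r ha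

lemma Δ_relLHS (i j k : Fin n) :
    Δ K n (relLHS K n c i j k) = ∑ m, t K n k m ⊗ₜ[K] relLHS K n c i j m := by
  simp only [relLHS, map_sum, map_smul, Δ_t, Finset.smul_sum,
    TensorProduct.tmul_sum, TensorProduct.tmul_smul]
  rw [Finset.sum_comm]

lemma Δ_relRHS (i j k : Fin n) :
    Δ K n (relRHS K n c i j k)
      = ∑ m, ∑ p, relRHS K n c m p k ⊗ₜ[K] (t K n m i * t K n p j) := by
  simp only [relRHS, map_sum, map_smul, map_mul, Δ_t, Finset.sum_mul_sum,
    Algebra.TensorProduct.tmul_mul_tmul, TensorProduct.sum_tmul,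
    TensorProduct.smul_tmul', Finset.smul_sum]
  refine Eq.trans (Finset.sum_congr rfl fun a _ => Finset.sum_comm) ?_
  refine Eq.trans (Finset.sum_comm) ?_
  refine Finset.sum_congr rfl fun m _ => ?_
  refine Eq.trans (Finset.sum_congr rfl fun a _ => Finset.sum_comm) ?_
  exact Finset.sum_comm

lemma mid (i j k : Fin n) :
    (∑ m, t K n k m ⊗ₜ[K] relRHS K n c i j m)
      = ∑ a, ∑ b, relLHS K n c a b k ⊗ₜ[K] (t K n a i * t K n b j) := by
  simp only [relRHS, relLHS, TensorProduct.tmul_sum, TensorProduct.tmul_smul,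
    TensorProduct.sum_tmul, TensorProduct.smul_tmul']
  rw [Finset.sum_comm]
  refine Finset.sum_congr rfl fun a _ => ?_
  rw [Finset.sum_comm]

lemma Δ_gen_mem (i j k : Fin n) :
    Δ K n (relLHS K n c i j k - relRHS K n c i j k) ∈ J K n c := by
  have key : Δ K n (relLHS K n c i j k - relRHS K n c i j k)
      = (∑ m, t K n k m ⊗ₜ[K] (relLHS K n c i j m - relRHS K n c i j m))
        + ∑ a, ∑ b, (relLHS K n c a b k - relRHS K n c a b k)
            ⊗ₜ[K] (t K n a i * t K n b j) := by
    rw [map_sub, Δ_relLHS, Δ_relRHS]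
    simp only [TensorProduct.tmul_sub, TensorProduct.sub_tmul, Finset.sum_sub_distrib]
    rw [← mid K n c i j k]
    abel
  rw [key]
  refine Submodule.add_mem _
    (Submodule.sum_mem _ fun m _ => tmul_mem_J_right K n c _ (gen_mem_I K n c i j m))
    (Submodule.sum_mem _ fun a _ => Submodule.sum_mem _ fun b _ =>
      tmul_mem_J_left K n c (gen_mem_I K n c a b k) _)

lemma Δ_I_subset : ∀ x ∈ I K n c, Δ K n x ∈ J K n c := by
  intro x hx
  have h := TwoSidedIdeal.mem_span_iff.mp hx
    (TwoSidedIdeal.mk' {x : F K n | Δ K n x ∈ J K n c}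
      (by simp only [Set.mem_setOf_eq, map_zero]; exact Submodule.zero_mem _)
      (fun {a b} ha hb => by
        simp only [Set.mem_setOf_eq, map_add] at *; exact Submodule.add_mem _ ha hb)
      (fun {a} ha => by
        simp only [Set.mem_setOf_eq, map_neg] at *; exact Submodule.neg_mem _ ha)
      (fun {a b} hb => by
        simp only [Set.mem_setOf_eq, map_mul] at *; exact J_mul_left K n c _ hb)
      (fun {a b} ha => by
        simp only [Set.mem_setOf_eq, map_mul] at *; exact J_mul_right K n c _ ha))
    (by rintro _ ⟨i, j, k, rfl⟩; simpa using Δ_gen_mem K n c i j k)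
  simpa using h

lemma ε_relLHS (i j k : Fin n) : ε K n (relLHS K n c i j k) = c i j k := by
  simp [relLHS, ε_t, smul_ite, Finset.sum_ite_eq]

lemma ε_relRHS (i j k : Fin n) : ε K n (relRHS K n c i j k) = c i j k := by
  simp [relRHS, ε_t, smul_ite, mul_ite, ite_mul, Finset.sum_ite_eq', Finset.sum_ite_eq]

lemma ε_I_zero : ∀ x ∈ I K n c, ε K n x = 0 := by
  intro x hx
  have h := TwoSidedIdeal.mem_span_iff.mp hx
    (TwoSidedIdeal.mk' {x : F K n | ε K n x = 0}
      (by simp)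
      (fun {a b} ha hb => by simp only [Set.mem_setOf_eq, map_add] at *; rw [ha, hb, add_zero])
      (fun {a} ha => by simp only [Set.mem_setOf_eq, map_neg] at *; rw [ha, neg_zero])
      (fun {a b} hb => by simp only [Set.mem_setOf_eq, map_mul] at *; rw [hb, mul_zero])
      (fun {a b} ha => by simp only [Set.mem_setOf_eq, map_mul] at *; rw [ha, zero_mul]))
    (by rintro _ ⟨i, j, k, rfl⟩
        simp only [SetLike.mem_coe, TwoSidedIdeal.mem_mk', Set.mem_setOf_eq, map_sub,
          ε_relLHS, ε_relRHS, sub_self])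
  simpa using h

def Δ'aux : M K n c →ₐ[K] M K n c ⊗[K] M K n c :=
  RingQuot.liftAlgHom K ⟨(Algebra.TensorProduct.map (mk K n c) (mk K n c)).comp (Δ K n), by
    rintro x y ⟨i, j, k, rfl, rfl⟩
    have h1 := congrArg (Algebra.TensorProduct.map (mk K n c) (mk K n c)) (mid K n c i j k)
    simp only [AlgHom.coe_comp, Function.comp_apply, Δ_relLHS, Δ_relRHS, map_sum,
      Algebra.TensorProduct.map_tmul] at h1 ⊢
    simp only [mk_rel] at h1 ⊢
    rw [h1]⟩

def ε'aux : M K n c →ₐ[K] K :=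
  RingQuot.liftAlgHom K ⟨ε K n, by
    rintro x y ⟨i, j, k, rfl, rfl⟩
    rw [ε_relLHS, ε_relRHS]⟩

lemma Δ'aux_t (i j : Fin n) :
    Δ'aux K n c (mk K n c (t K n i j))
      = ∑ a, mk K n c (t K n i a) ⊗ₜ[K] mk K n c (t K n a j) := by
  unfold Δ'aux
  erw [RingQuot.liftAlgHom_mkAlgHom_apply]
  simp [Δ_t]

lemma ε'aux_t (i j : Fin n) :
    ε'aux K n c (mk K n c (t K n i j)) = if i = j then (1 : K) else 0 := by
  unfold ε'aux mk
  rw [RingQuot.liftAlgHom_mkAlgHom_apply, ε_t]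

lemma M_hom_ext {B : Type*} [Semiring B] [Algebra K B] (f g : M K n c →ₐ[K] B)
    (h : ∀ i j, f (mk K n c (t K n i j)) = g (mk K n c (t K n i j))) : f = g := by
  refine RingQuot.ringQuot_ext' K _ _ (FreeAlgebra.hom_ext (funext fun p => ?_))
  simpa [mk, t] using h p.1 p.2
-- AUX END

theorem comeasuring_bialgebra :
    (∀ x ∈ I K n c, Δ K n x ∈ J K n c) ∧
    (∀ x ∈ I K n c, ε K n x = 0) ∧
    ∃ (Δ' : M K n c →ₐ[K] M K n c ⊗[K] M K n c) (ε' : M K n c →ₐ[K] K),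
      (∀ i j, Δ' (mk K n c (t K n i j))
          = ∑ a, mk K n c (t K n i a) ⊗ₜ[K] mk K n c (t K n a j)) ∧
      (∀ i j, ε' (mk K n c (t K n i j)) = if i = j then 1 else 0) ∧
      (Algebra.TensorProduct.assoc K K K (M K n c) (M K n c) (M K n c)).toAlgHom.comp
          ((Algebra.TensorProduct.map Δ' (AlgHom.id K (M K n c))).comp Δ')
        = (Algebra.TensorProduct.map (AlgHom.id K (M K n c)) Δ').comp Δ' ∧
      (Algebra.TensorProduct.lid K (M K n c)).toAlgHom.comp
          ((Algebra.TensorProduct.map ε' (AlgHom.id K (M K n c))).comp Δ')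
        = AlgHom.id K (M K n c) ∧
      (Algebra.TensorProduct.rid K K (M K n c)).toAlgHom.comp
          ((Algebra.TensorProduct.map (AlgHom.id K (M K n c)) ε').comp Δ')
        = AlgHom.id K (M K n c) := by
  refine ⟨Δ_I_subset K n c, ε_I_zero K n c, Δ'aux K n c, ε'aux K n c,
    Δ'aux_t K n c, ε'aux_t K n c, ?_, ?_, ?_⟩
  · refine M_hom_ext K n c _ _ fun i j => ?_
    simp only [AlgHom.coe_comp, Function.comp_apply, AlgEquiv.toAlgHom_eq_coe,
      AlgEquiv.coe_algHom, Δ'aux_t, map_sum, Algebra.TensorProduct.map_tmul,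
      AlgHom.coe_id, id_eq, TensorProduct.sum_tmul, TensorProduct.tmul_sum,
      Algebra.TensorProduct.assoc_tmul]
    rw [Finset.sum_comm]
  · refine M_hom_ext K n c _ _ fun i j => ?_
    simp [Δ'aux_t, ε'aux_t, Algebra.TensorProduct.map_tmul,
      TensorProduct.lid_tmul, ite_smul, Finset.sum_ite_eq]
  · refine M_hom_ext K n c _ _ fun i j => ?_
    simp [Δ'aux_t, ε'aux_t, Algebra.TensorProduct.map_tmul,
      TensorProduct.rid_tmul, ite_smul, Finset.sum_ite_eq']


end Stmt0
end
end

section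
/- Let k be a field, m a natural number, and let c_{ij}^k (i,j,k ∈ Fin m) and c_{ij}^0 (i,j ∈ Fin m) be arbitrary scalars in k. Let F be the free k-algebra on generators b_i and t^i_j (i,j ∈ Fin m), and let I be the two-sided ideal generated by the elements (Σ_a c_{ij}^a t^k_a) − (Σ_{a,b} c_{ab}^k t^a_i t^b_j + b_i t^k_j + t^k_i b_j) for all i,j,k, together with (c_{ij}^0·1 + Σ_a c_{ij}^a b_a) − (Σ_{a,b} c_{ab}^0 t^a_i t^b_j + b_i b_j) for all i,j. Let Δ : F → F ⊗ F and ε : F → k be the unique k-algebra homomorphisms with Δ(t^i_j) = Σ_a t^i_a ⊗ t^a_j, Δ(b_i) = Σ_a b_a ⊗ t^a_i + 1 ⊗ b_i, ε(t^i_j) = δ_{ij}, ε(b_i) = 0. Then Δ(I) ⊆ I ⊗ F + F ⊗ I and ε(I) = 0, so Δ and ε descend to the quotient M = F/I, making M a k-bialgebra. -/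
open scoped TensorProduct

noncomputable section
namespace Stmt2

variable (K : Type*) [Field K] (m : ℕ)
  (c : Fin m → Fin m → Fin m → K) (c0 : Fin m → Fin m → K)

/-- The free algebra on the generators `b_i` (left summand) and `t^i_j` (right summand). -/
abbrev F : Type _ := FreeAlgebra K (Fin m ⊕ Fin m × Fin m)

/-- The generator `b_i`. -/
def b (i : Fin m) : F K m := FreeAlgebra.ι K (Sum.inl i)

/-- The generator `t^i_j`. -/
def t (i j : Fin m) : F K m := FreeAlgebra.ι K (Sum.inr (i, j))

/-- First family of relations:
`Σ_a c_{ij}^a t^k_a  =  Σ_{a,b} c_{ab}^k t^a_i t^b_j + b_i t^k_j + t^k_i b_j`. -/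
def relT (i j k : Fin m) : F K m :=
  (∑ a, c i j a • t K m k a)
    - ((∑ a, ∑ a', c a a' k • (t K m a i * t K m a' j))
        + b K m i * t K m k j + t K m k i * b K m j)

/-- Second family of relations:
`c_{ij}^0·1 + Σ_a c_{ij}^a b_a  =  Σ_{a,b} c_{ab}^0 t^a_i t^b_j + b_i b_j`. -/
def relB (i j : Fin m) : F K m :=
  (c0 i j • (1 : F K m) + ∑ a, c i j a • b K m a)
    - ((∑ a, ∑ a', c0 a a' • (t K m a i * t K m a' j)) + b K m i * b K m j)

/-- The two-sided ideal `I` generated by the relations. -/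
def I : TwoSidedIdeal (F K m) :=
  TwoSidedIdeal.span
    ({x | ∃ i j k, x = relT K m c i j k} ∪ {x | ∃ i j, x = relB K m c c0 i j})

/-- The coproduct on the free algebra: the unique algebra map with
`Δ(t^i_j) = Σ_a t^i_a ⊗ t^a_j` and `Δ(b_i) = Σ_a b_a ⊗ t^a_i + 1 ⊗ b_i`. -/
def Δ : F K m →ₐ[K] F K m ⊗[K] F K m :=
  FreeAlgebra.lift K (fun p => match p with
    | Sum.inl i => (∑ a, b K m a ⊗ₜ[K] t K m a i) + (1 : F K m) ⊗ₜ[K] b K m i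
    | Sum.inr (i, j) => ∑ a, t K m i a ⊗ₜ[K] t K m a j)

/-- The counit: the unique algebra map with `ε(t^i_j) = δ_{ij}`, `ε(b_i) = 0`. -/
def ε : F K m →ₐ[K] K :=
  FreeAlgebra.lift K (fun p => match p with
    | Sum.inl _ => (0 : K)
    | Sum.inr (i, j) => if i = j then 1 else 0)

/-- The subspace `I ⊗ F + F ⊗ I` of `F ⊗ F`. -/
def J : Submodule K (F K m ⊗[K] F K m) :=
  Submodule.span K
    ({z | ∃ x ∈ I K m c c0, ∃ y, z = x ⊗ₜ[K] y}
      ∪ {z | ∃ x, ∃ y ∈ I K m c c0, z = x ⊗ₜ[K] y})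

/-- The relation whose `RingQuot` is the quotient `M = F/I`. -/
def rel : F K m → F K m → Prop := fun x y =>
  (∃ i j k, x = ∑ a, c i j a • t K m k a
      ∧ y = (∑ a, ∑ a', c a a' k • (t K m a i * t K m a' j))
          + b K m i * t K m k j + t K m k i * b K m j)
  ∨ (∃ i j, x = c0 i j • (1 : F K m) + ∑ a, c i j a • b K m a
      ∧ y = (∑ a, ∑ a', c0 a a' • (t K m a i * t K m a' j)) + b K m i * b K m j)

/-- The comeasuring bialgebra `M = F/I`. -/
abbrev M : Type _ := RingQuot (rel K m c c0)

/-- The quotient map. -/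
def mk : F K m →ₐ[K] M K m c c0 := RingQuot.mkAlgHom K (rel K m c c0)


/-! ### Auxiliary lemmas -/

private lemma rot3 {V : Type*} [AddCommMonoid V] {n : ℕ} (f : Fin n → Fin n → Fin n → V) :
    ∑ x, ∑ y, ∑ z, f x y z = ∑ y, ∑ z, ∑ x, f x y z := by
  rw [Finset.sum_comm]
  exact Finset.sum_congr rfl fun _ _ => Finset.sum_comm

private lemma perm4 {V : Type*} [AddCommMonoid V] {n : ℕ} (g : Fin n → Fin n → Fin n → Fin n → V) :
    ∑ p, ∑ q, ∑ r, ∑ s, g p q r s = ∑ s, ∑ r, ∑ p, ∑ q, g p q r s := by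
  trans ∑ p, ∑ r, ∑ s, ∑ q, g p q r s
  · exact Finset.sum_congr rfl fun p _ => rot3 (fun q r s => g p q r s)
  trans ∑ r, ∑ s, ∑ p, ∑ q, g p q r s
  · exact rot3 (fun p r s => ∑ q, g p q r s)
  · exact Finset.sum_comm

set_option maxHeartbeats 4000000 in
lemma delta_relT (i j k : Fin m) :
    Δ K m (relT K m c i j k)
      = (∑ p, t K m k p ⊗ₜ[K] relT K m c i j p)
        + ∑ p, ∑ q, relT K m c p q k ⊗ₜ[K] (t K m p i * t K m q j) := by
  simp only [relT, map_sub, map_add, map_sum, map_smul, map_mul, Δ, t, b,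
    FreeAlgebra.lift_ι_apply, add_mul, mul_add, smul_mul_assoc, mul_smul_comm,
    TensorProduct.tmul_sub, TensorProduct.sub_tmul,
    TensorProduct.tmul_add, TensorProduct.add_tmul, TensorProduct.tmul_sum,
    TensorProduct.sum_tmul, TensorProduct.tmul_smul, TensorProduct.smul_tmul',
    Finset.mul_sum, Finset.sum_mul, Finset.smul_sum, Finset.sum_sub_distrib,
    Finset.sum_add_distrib,
    Algebra.TensorProduct.tmul_mul_tmul, one_mul, mul_one]
  rw [show (∑ x : Fin m, ∑ y : Fin m, (c i j x • FreeAlgebra.ι K (Sum.inr (k, y))) ⊗ₜ[K]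
        FreeAlgebra.ι K (Sum.inr (y, x)))
      = ∑ x : Fin m, ∑ y : Fin m, (c i j y • FreeAlgebra.ι K (Sum.inr (k, x))) ⊗ₜ[K]
        FreeAlgebra.ι K (Sum.inr (x, y)) from Finset.sum_comm]
  rw [show (∑ x : Fin m, ∑ y : Fin m, ∑ z : Fin m, ∑ w : Fin m,
        (c x y k • (FreeAlgebra.ι K (Sum.inr (x, w)) * FreeAlgebra.ι K (Sum.inr (y, z)))) ⊗ₜ[K]
          (FreeAlgebra.ι K (Sum.inr (w, i)) * FreeAlgebra.ι K (Sum.inr (z, j))))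
      = ∑ x : Fin m, ∑ y : Fin m, ∑ z : Fin m, ∑ a : Fin m,
        (c z a k • (FreeAlgebra.ι K (Sum.inr (z, x)) * FreeAlgebra.ι K (Sum.inr (a, y)))) ⊗ₜ[K]
          (FreeAlgebra.ι K (Sum.inr (x, i)) * FreeAlgebra.ι K (Sum.inr (y, j)))
      from perm4 _]
  rw [show (∑ x : Fin m, ∑ y : Fin m,
        (FreeAlgebra.ι K (Sum.inl y) * FreeAlgebra.ι K (Sum.inr (k, x))) ⊗ₜ[K]
          (FreeAlgebra.ι K (Sum.inr (y, i)) * FreeAlgebra.ι K (Sum.inr (x, j))))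
      = ∑ x : Fin m, ∑ y : Fin m,
        (FreeAlgebra.ι K (Sum.inl x) * FreeAlgebra.ι K (Sum.inr (k, y))) ⊗ₜ[K]
          (FreeAlgebra.ι K (Sum.inr (x, i)) * FreeAlgebra.ι K (Sum.inr (y, j)))
      from Finset.sum_comm]
  rw [show (∑ x : Fin m, ∑ y : Fin m,
        (FreeAlgebra.ι K (Sum.inr (k, y)) * FreeAlgebra.ι K (Sum.inl x)) ⊗ₜ[K]
          (FreeAlgebra.ι K (Sum.inr (y, i)) * FreeAlgebra.ι K (Sum.inr (x, j))))
      = ∑ x : Fin m, ∑ y : Fin m,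
        (FreeAlgebra.ι K (Sum.inr (k, x)) * FreeAlgebra.ι K (Sum.inl y)) ⊗ₜ[K]
          (FreeAlgebra.ι K (Sum.inr (x, i)) * FreeAlgebra.ι K (Sum.inr (y, j)))
      from Finset.sum_comm]
  rw [show (∑ x : Fin m, ∑ y : Fin m, ∑ z : Fin m,
        (c y z x • FreeAlgebra.ι K (Sum.inr (k, x))) ⊗ₜ[K]
          (FreeAlgebra.ι K (Sum.inr (y, i)) * FreeAlgebra.ι K (Sum.inr (z, j))))
      = ∑ x : Fin m, ∑ y : Fin m, ∑ a : Fin m,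
        (c x y a • FreeAlgebra.ι K (Sum.inr (k, a))) ⊗ₜ[K]
          (FreeAlgebra.ι K (Sum.inr (x, i)) * FreeAlgebra.ι K (Sum.inr (y, j)))
      from rot3 _]
  abel

set_option maxHeartbeats 4000000 in
lemma delta_relB (i j : Fin m) :
    Δ K m (relB K m c c0 i j)
      = (1 : F K m) ⊗ₜ[K] relB K m c c0 i j
        + (∑ a, b K m a ⊗ₜ[K] relT K m c i j a)
        + ∑ p, ∑ q, relB K m c c0 p q ⊗ₜ[K] (t K m p i * t K m q j) := by
  simp only [relB, relT, map_sub, map_add, map_sum, map_smul, map_mul, map_one, Δ, t, b,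
    FreeAlgebra.lift_ι_apply, add_mul, mul_add, smul_mul_assoc, mul_smul_comm, smul_add,
    TensorProduct.tmul_sub, TensorProduct.sub_tmul,
    TensorProduct.tmul_add, TensorProduct.add_tmul, TensorProduct.tmul_sum,
    TensorProduct.sum_tmul, TensorProduct.tmul_smul, TensorProduct.smul_tmul',
    Finset.mul_sum, Finset.sum_mul, Finset.smul_sum, Finset.sum_sub_distrib,
    Finset.sum_add_distrib, Algebra.TensorProduct.one_def,
    Algebra.TensorProduct.tmul_mul_tmul, one_mul, mul_one]
  rw [show (∑ x : Fin m, ∑ y : Fin m,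
        (c i j x • FreeAlgebra.ι K (Sum.inl y)) ⊗ₜ[K] FreeAlgebra.ι K (Sum.inr (y, x)))
      = ∑ x : Fin m, ∑ y : Fin m,
        (c i j y • FreeAlgebra.ι K (Sum.inl x)) ⊗ₜ[K] FreeAlgebra.ι K (Sum.inr (x, y))
      from Finset.sum_comm]
  rw [show (∑ x : Fin m, ∑ y : Fin m, ∑ z : Fin m, ∑ w : Fin m,
        (c0 x y • (FreeAlgebra.ι K (Sum.inr (x, w)) * FreeAlgebra.ι K (Sum.inr (y, z)))) ⊗ₜ[K]
          (FreeAlgebra.ι K (Sum.inr (w, i)) * FreeAlgebra.ι K (Sum.inr (z, j))))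
      = ∑ x : Fin m, ∑ y : Fin m, ∑ z : Fin m, ∑ a : Fin m,
        (c0 z a • (FreeAlgebra.ι K (Sum.inr (z, x)) * FreeAlgebra.ι K (Sum.inr (a, y)))) ⊗ₜ[K]
          (FreeAlgebra.ι K (Sum.inr (x, i)) * FreeAlgebra.ι K (Sum.inr (y, j)))
      from perm4 _]
  rw [show (∑ x : Fin m, ∑ y : Fin m,
        (FreeAlgebra.ι K (Sum.inl y) * FreeAlgebra.ι K (Sum.inl x)) ⊗ₜ[K]
          (FreeAlgebra.ι K (Sum.inr (y, i)) * FreeAlgebra.ι K (Sum.inr (x, j))))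
      = ∑ x : Fin m, ∑ y : Fin m,
        (FreeAlgebra.ι K (Sum.inl x) * FreeAlgebra.ι K (Sum.inl y)) ⊗ₜ[K]
          (FreeAlgebra.ι K (Sum.inr (x, i)) * FreeAlgebra.ι K (Sum.inr (y, j)))
      from Finset.sum_comm]
  rw [show (∑ x : Fin m, ∑ y : Fin m, ∑ z : Fin m,
        (c y z x • FreeAlgebra.ι K (Sum.inl x)) ⊗ₜ[K]
          (FreeAlgebra.ι K (Sum.inr (y, i)) * FreeAlgebra.ι K (Sum.inr (z, j))))
      = ∑ x : Fin m, ∑ y : Fin m, ∑ a : Fin m,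
        (c x y a • FreeAlgebra.ι K (Sum.inl a)) ⊗ₜ[K]
          (FreeAlgebra.ι K (Sum.inr (x, i)) * FreeAlgebra.ι K (Sum.inr (y, j)))
      from rot3 _]
  abel

lemma relT_mem (i j k : Fin m) : relT K m c i j k ∈ I K m c c0 :=
  TwoSidedIdeal.subset_span (Or.inl ⟨i, j, k, rfl⟩)

lemma relB_mem (i j : Fin m) : relB K m c c0 i j ∈ I K m c c0 :=
  TwoSidedIdeal.subset_span (Or.inr ⟨i, j, rfl⟩)

lemma tmul_mem_J_left {x : F K m} (hx : x ∈ I K m c c0) (y : F K m) :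
    x ⊗ₜ[K] y ∈ J K m c c0 :=
  Submodule.subset_span (Or.inl ⟨x, hx, y, rfl⟩)

lemma tmul_mem_J_right (x : F K m) {y : F K m} (hy : y ∈ I K m c c0) :
    x ⊗ₜ[K] y ∈ J K m c c0 :=
  Submodule.subset_span (Or.inr ⟨x, y, hy, rfl⟩)

lemma J_mul_left (z : F K m ⊗[K] F K m) {w : F K m ⊗[K] F K m} (hw : w ∈ J K m c c0) :
    z * w ∈ J K m c c0 := by
  induction hw using Submodule.span_induction with
  | mem g hg =>
      induction z using TensorProduct.induction_on with
      | zero => simpa using (J K m c c0).zero_mem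
      | tmul a b' =>
          obtain (⟨x, hx, y, rfl⟩ | ⟨x, y, hy, rfl⟩) := hg
          · rw [Algebra.TensorProduct.tmul_mul_tmul]
            exact tmul_mem_J_left K m c c0 (TwoSidedIdeal.mul_mem_left _ _ _ hx) _
          · rw [Algebra.TensorProduct.tmul_mul_tmul]
            exact tmul_mem_J_right K m c c0 _ (TwoSidedIdeal.mul_mem_left _ _ _ hy)
      | add z1 z2 h1 h2 => rw [add_mul]; exact Submodule.add_mem _ h1 h2
  | zero => simpa using (J K m c c0).zero_mem
  | add x y _ _ h1 h2 => rw [mul_add]; exact Submodule.add_mem _ h1 h2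
  | smul k x _ h => rw [mul_smul_comm]; exact Submodule.smul_mem _ _ h

lemma J_mul_right (z : F K m ⊗[K] F K m) {w : F K m ⊗[K] F K m} (hw : w ∈ J K m c c0) :
    w * z ∈ J K m c c0 := by
  induction hw using Submodule.span_induction with
  | mem g hg =>
      induction z using TensorProduct.induction_on with
      | zero => simpa using (J K m c c0).zero_mem
      | tmul a b' =>
          obtain (⟨x, hx, y, rfl⟩ | ⟨x, y, hy, rfl⟩) := hg
          · rw [Algebra.TensorProduct.tmul_mul_tmul]
            exact tmul_mem_J_left K m c c0 (TwoSidedIdeal.mul_mem_right _ _ _ hx) _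
          · rw [Algebra.TensorProduct.tmul_mul_tmul]
            exact tmul_mem_J_right K m c c0 _ (TwoSidedIdeal.mul_mem_right _ _ _ hy)
      | add z1 z2 h1 h2 => rw [mul_add]; exact Submodule.add_mem _ h1 h2
  | zero => simpa using (J K m c c0).zero_mem
  | add x y _ _ h1 h2 => rw [add_mul]; exact Submodule.add_mem _ h1 h2
  | smul k x _ h => rw [smul_mul_assoc]; exact Submodule.smul_mem _ _ h

lemma delta_relT_mem_J (i j k : Fin m) : Δ K m (relT K m c i j k) ∈ J K m c c0 := by
  rw [delta_relT]
  refine Submodule.add_mem _ (Submodule.sum_mem _ fun p _ => ?_)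
    (Submodule.sum_mem _ fun p _ => Submodule.sum_mem _ fun q _ => ?_)
  · exact tmul_mem_J_right K m c c0 _ (relT_mem K m c c0 i j p)
  · exact tmul_mem_J_left K m c c0 (relT_mem K m c c0 p q k) _

lemma delta_relB_mem_J (i j : Fin m) : Δ K m (relB K m c c0 i j) ∈ J K m c c0 := by
  rw [delta_relB]
  refine Submodule.add_mem _ (Submodule.add_mem _ ?_ (Submodule.sum_mem _ fun a _ => ?_))
    (Submodule.sum_mem _ fun p _ => Submodule.sum_mem _ fun q _ => ?_)
  · exact tmul_mem_J_right K m c c0 _ (relB_mem K m c c0 i j)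
  · exact tmul_mem_J_right K m c c0 _ (relT_mem K m c c0 i j a)
  · exact tmul_mem_J_left K m c c0 (relB_mem K m c c0 p q) _

lemma delta_I_mem : ∀ x ∈ I K m c c0, Δ K m x ∈ J K m c c0 := by
  intro x hx
  have h := TwoSidedIdeal.mem_span_iff.mp hx
    (TwoSidedIdeal.mk' {x : F K m | Δ K m x ∈ J K m c c0}
      (by simp only [Set.mem_setOf_eq, map_zero]; exact (J K m c c0).zero_mem)
      (fun {a b} ha hb => by
        simp only [Set.mem_setOf_eq, map_add] at *; exact Submodule.add_mem _ ha hb)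
      (fun {a} ha => by
        simp only [Set.mem_setOf_eq, map_neg] at *; exact Submodule.neg_mem _ ha)
      (fun {a b} hb => by
        simp only [Set.mem_setOf_eq, map_mul] at *; exact J_mul_left K m c c0 _ hb)
      (fun {a b} ha => by
        simp only [Set.mem_setOf_eq, map_mul] at *; exact J_mul_right K m c c0 _ ha))
    ?_
  · rwa [TwoSidedIdeal.mem_mk'] at h
  · rintro x (⟨i, j, k, rfl⟩ | ⟨i, j, rfl⟩) <;>
      simp only [SetLike.mem_coe, TwoSidedIdeal.mem_mk', Set.mem_setOf_eq]
    · exact delta_relT_mem_J K m c c0 i j k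
    · exact delta_relB_mem_J K m c c0 i j

lemma eps_relT (i j k : Fin m) : ε K m (relT K m c i j k) = 0 := by
  simp [relT, ε, t, b, smul_eq_mul, mul_ite, ite_mul, Finset.sum_ite_eq', Finset.sum_ite_eq]

lemma eps_relB (i j : Fin m) : ε K m (relB K m c c0 i j) = 0 := by
  simp [relB, ε, t, b, smul_eq_mul, mul_ite, ite_mul, Finset.sum_ite_eq', Finset.sum_ite_eq]

lemma eps_I_mem : ∀ x ∈ I K m c c0, ε K m x = 0 := by
  intro x hx
  have h := TwoSidedIdeal.mem_span_iff.mp hx (TwoSidedIdeal.ker (ε K m)) ?_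
  · rwa [TwoSidedIdeal.mem_ker] at h
  · rintro x (⟨i, j, k, rfl⟩ | ⟨i, j, rfl⟩) <;>
      simp only [SetLike.mem_coe, TwoSidedIdeal.mem_ker]
    · exact eps_relT K m c i j k
    · exact eps_relB K m c c0 i j

lemma mk_relT (i j k : Fin m) : mk K m c c0 (relT K m c i j k) = 0 := by
  rw [relT, map_sub]
  exact sub_eq_zero.mpr (RingQuot.mkAlgHom_rel K (Or.inl ⟨i, j, k, rfl, rfl⟩))

lemma mk_relB (i j : Fin m) : mk K m c c0 (relB K m c c0 i j) = 0 := by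
  rw [relB, map_sub]
  exact sub_eq_zero.mpr (RingQuot.mkAlgHom_rel K (Or.inr ⟨i, j, rfl, rfl⟩))

lemma mk_I_mem : ∀ x ∈ I K m c c0, mk K m c c0 x = 0 := by
  intro x hx
  have h := TwoSidedIdeal.mem_span_iff.mp hx (TwoSidedIdeal.ker (mk K m c c0)) ?_
  · rwa [TwoSidedIdeal.mem_ker] at h
  · rintro x (⟨i, j, k, rfl⟩ | ⟨i, j, rfl⟩) <;>
      simp only [SetLike.mem_coe, TwoSidedIdeal.mem_ker]
    · exact mk_relT K m c c0 i j k
    · exact mk_relB K m c c0 i j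

lemma mapmk_J_zero : ∀ w ∈ J K m c c0,
    Algebra.TensorProduct.map (mk K m c c0) (mk K m c c0) w = 0 := by
  intro w hw
  induction hw using Submodule.span_induction with
  | mem g hg =>
      obtain (⟨x, hx, y, rfl⟩ | ⟨x, y, hy, rfl⟩) := hg
      · rw [Algebra.TensorProduct.map_tmul, mk_I_mem K m c c0 x hx, TensorProduct.zero_tmul]
      · rw [Algebra.TensorProduct.map_tmul, mk_I_mem K m c c0 y hy, TensorProduct.tmul_zero]
  | zero => exact map_zero _
  | add x y _ _ h1 h2 => rw [map_add, h1, h2, add_zero]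
  | smul k x _ h => rw [map_smul, h, smul_zero]

/-- The comultiplication on `F` composed with the quotient map on both factors. -/
def Dhat : F K m →ₐ[K] M K m c c0 ⊗[K] M K m c c0 :=
  (Algebra.TensorProduct.map (mk K m c c0) (mk K m c c0)).comp (Δ K m)

lemma sub_mem_I_of_rel {x y : F K m} (h : rel K m c c0 x y) : x - y ∈ I K m c c0 := by
  obtain (⟨i, j, k, hx, hy⟩ | ⟨i, j, hx, hy⟩) := h
  · rw [hx, hy]; exact relT_mem K m c c0 i j k
  · rw [hx, hy]; exact relB_mem K m c c0 i j

lemma Dhat_rel : ∀ ⦃x y⦄, rel K m c c0 x y → Dhat K m c c0 x = Dhat K m c c0 y := by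
  intro x y h
  have h0 : Dhat K m c c0 (x - y) = 0 :=
    mapmk_J_zero K m c c0 _ (delta_I_mem K m c c0 _ (sub_mem_I_of_rel K m c c0 h))
  rw [map_sub, sub_eq_zero] at h0
  exact h0

lemma eps_rel : ∀ ⦃x y⦄, rel K m c c0 x y → ε K m x = ε K m y := by
  intro x y h
  have h0 : ε K m (x - y) = 0 := eps_I_mem K m c c0 _ (sub_mem_I_of_rel K m c c0 h)
  rw [map_sub, sub_eq_zero] at h0
  exact h0

/-- The induced comultiplication on `M`. -/
def D' : M K m c c0 →ₐ[K] M K m c c0 ⊗[K] M K m c c0 :=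
  RingQuot.liftAlgHom K ⟨Dhat K m c c0, Dhat_rel K m c c0⟩

/-- The induced counit on `M`. -/
def E' : M K m c c0 →ₐ[K] K :=
  RingQuot.liftAlgHom K ⟨ε K m, eps_rel K m c c0⟩

lemma D'_mk (x : F K m) : D' K m c c0 (mk K m c c0 x) = Dhat K m c c0 x :=
  RingQuot.liftAlgHom_mkAlgHom_apply _ _ _ _

lemma E'_mk (x : F K m) : E' K m c c0 (mk K m c c0 x) = ε K m x :=
  RingQuot.liftAlgHom_mkAlgHom_apply _ _ _ _

lemma D'_t (i j : Fin m) : D' K m c c0 (mk K m c c0 (t K m i j))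
    = ∑ a, mk K m c c0 (t K m i a) ⊗ₜ[K] mk K m c c0 (t K m a j) := by
  rw [D'_mk]
  simp [Dhat, Δ, t, Algebra.TensorProduct.map_tmul]

lemma D'_b (i : Fin m) : D' K m c c0 (mk K m c c0 (b K m i))
    = (∑ a, mk K m c c0 (b K m a) ⊗ₜ[K] mk K m c c0 (t K m a i))
      + 1 ⊗ₜ[K] mk K m c c0 (b K m i) := by
  rw [D'_mk]
  simp [Dhat, Δ, t, b, Algebra.TensorProduct.map_tmul]

lemma E'_t (i j : Fin m) : E' K m c c0 (mk K m c c0 (t K m i j)) = if i = j then 1 else 0 := by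
  rw [E'_mk]; simp [ε, t]

lemma E'_b (i : Fin m) : E' K m c c0 (mk K m c c0 (b K m i)) = 0 := by
  rw [E'_mk]; simp [ε, b]

lemma mk_eq : RingQuot.mkAlgHom K (rel K m c c0) = mk K m c c0 := rfl

lemma coassoc :
    (Algebra.TensorProduct.assoc K K K (M K m c c0) (M K m c c0) (M K m c c0)).toAlgHom.comp
        ((Algebra.TensorProduct.map (D' K m c c0) (AlgHom.id K (M K m c c0))).comp (D' K m c c0))
      = (Algebra.TensorProduct.map (AlgHom.id K (M K m c c0)) (D' K m c c0)).comp
          (D' K m c c0) := by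
  apply RingQuot.ringQuot_ext'
  apply FreeAlgebra.hom_ext
  funext p
  simp only [Function.comp_apply, AlgHom.coe_comp, AlgHom.coe_coe]
  rcases p with i | ⟨i, j⟩
  · show (Algebra.TensorProduct.assoc K K K _ _ _).toAlgHom
        ((Algebra.TensorProduct.map (D' K m c c0) (AlgHom.id K _))
          (D' K m c c0 (mk K m c c0 (b K m i))))
      = (Algebra.TensorProduct.map (AlgHom.id K _) (D' K m c c0))
          (D' K m c c0 (mk K m c c0 (b K m i)))
    simp only [D'_b, D'_t, map_add, map_sum, Algebra.TensorProduct.map_tmul,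
      AlgHom.id_apply, map_one, AlgEquiv.toAlgHom_eq_coe, AlgHom.coe_coe, AlgEquiv.coe_toAlgHom,
      Algebra.TensorProduct.assoc_tmul, TensorProduct.tmul_add, TensorProduct.tmul_sum,
      TensorProduct.sum_tmul, TensorProduct.add_tmul, Finset.sum_add_distrib,
      Algebra.TensorProduct.one_def]
    rw [Finset.sum_comm, add_assoc]
  · show (Algebra.TensorProduct.assoc K K K _ _ _).toAlgHom
        ((Algebra.TensorProduct.map (D' K m c c0) (AlgHom.id K _))
          (D' K m c c0 (mk K m c c0 (t K m i j))))
      = (Algebra.TensorProduct.map (AlgHom.id K _) (D' K m c c0))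
          (D' K m c c0 (mk K m c c0 (t K m i j)))
    simp only [D'_b, D'_t, map_add, map_sum, Algebra.TensorProduct.map_tmul,
      AlgHom.id_apply, map_one, AlgEquiv.toAlgHom_eq_coe, AlgHom.coe_coe, AlgEquiv.coe_toAlgHom,
      Algebra.TensorProduct.assoc_tmul, TensorProduct.tmul_add, TensorProduct.tmul_sum,
      TensorProduct.sum_tmul, TensorProduct.add_tmul, Finset.sum_add_distrib,
      Algebra.TensorProduct.one_def]
    exact Finset.sum_comm

lemma counit_left :
    (Algebra.TensorProduct.lid K (M K m c c0)).toAlgHom.comp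
        ((Algebra.TensorProduct.map (E' K m c c0) (AlgHom.id K (M K m c c0))).comp
          (D' K m c c0))
      = AlgHom.id K (M K m c c0) := by
  apply RingQuot.ringQuot_ext'
  apply FreeAlgebra.hom_ext
  funext p
  simp only [Function.comp_apply, AlgHom.coe_comp, AlgHom.coe_coe]
  rcases p with i | ⟨i, j⟩
  · show (Algebra.TensorProduct.lid K _).toAlgHom
        ((Algebra.TensorProduct.map (E' K m c c0) (AlgHom.id K _))
          (D' K m c c0 (mk K m c c0 (b K m i))))
      = (AlgHom.id K _) (mk K m c c0 (b K m i))
    simp only [D'_b, D'_t, E'_t, E'_b, map_add, map_sum, Algebra.TensorProduct.map_tmul,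
      AlgHom.id_apply, map_one, AlgEquiv.toAlgHom_eq_coe, AlgHom.coe_coe, AlgEquiv.coe_toAlgHom,
      Algebra.TensorProduct.lid_tmul, zero_smul, one_smul, Finset.sum_const_zero, zero_add]
  · show (Algebra.TensorProduct.lid K _).toAlgHom
        ((Algebra.TensorProduct.map (E' K m c c0) (AlgHom.id K _))
          (D' K m c c0 (mk K m c c0 (t K m i j))))
      = (AlgHom.id K _) (mk K m c c0 (t K m i j))
    simp only [D'_b, D'_t, E'_t, E'_b, map_add, map_sum, Algebra.TensorProduct.map_tmul,
      AlgHom.id_apply, map_one, AlgEquiv.toAlgHom_eq_coe, AlgHom.coe_coe, AlgEquiv.coe_toAlgHom,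
      Algebra.TensorProduct.lid_tmul, ite_smul, zero_smul, one_smul, Finset.sum_ite_eq,
      Finset.mem_univ, if_true]

lemma counit_right :
    (Algebra.TensorProduct.rid K K (M K m c c0)).toAlgHom.comp
        ((Algebra.TensorProduct.map (AlgHom.id K (M K m c c0)) (E' K m c c0)).comp
          (D' K m c c0))
      = AlgHom.id K (M K m c c0) := by
  apply RingQuot.ringQuot_ext'
  apply FreeAlgebra.hom_ext
  funext p
  simp only [Function.comp_apply, AlgHom.coe_comp, AlgHom.coe_coe]
  rcases p with i | ⟨i, j⟩
  · show (Algebra.TensorProduct.rid K K _).toAlgHom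
        ((Algebra.TensorProduct.map (AlgHom.id K _) (E' K m c c0))
          (D' K m c c0 (mk K m c c0 (b K m i))))
      = (AlgHom.id K _) (mk K m c c0 (b K m i))
    simp only [D'_b, D'_t, E'_t, E'_b, map_add, map_sum, Algebra.TensorProduct.map_tmul,
      AlgHom.id_apply, map_one, AlgEquiv.toAlgHom_eq_coe, AlgHom.coe_coe, AlgEquiv.coe_toAlgHom,
      Algebra.TensorProduct.rid_tmul, ite_smul, zero_smul, one_smul, smul_zero,
      Finset.sum_ite_eq', Finset.mem_univ, if_true, add_zero, zero_add]
  · show (Algebra.TensorProduct.rid K K _).toAlgHom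
        ((Algebra.TensorProduct.map (AlgHom.id K _) (E' K m c c0))
          (D' K m c c0 (mk K m c c0 (t K m i j))))
      = (AlgHom.id K _) (mk K m c c0 (t K m i j))
    simp only [D'_b, D'_t, E'_t, E'_b, map_add, map_sum, Algebra.TensorProduct.map_tmul,
      AlgHom.id_apply, map_one, AlgEquiv.toAlgHom_eq_coe, AlgHom.coe_coe, AlgEquiv.coe_toAlgHom,
      Algebra.TensorProduct.rid_tmul, ite_smul, zero_smul, one_smul, Finset.sum_ite_eq',
      Finset.mem_univ, if_true]
theorem comeasuring_bialgebra :
    (∀ x ∈ I K m c c0, Δ K m x ∈ J K m c c0) ∧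
    (∀ x ∈ I K m c c0, ε K m x = 0) ∧
    ∃ (Δ' : M K m c c0 →ₐ[K] M K m c c0 ⊗[K] M K m c c0) (ε' : M K m c c0 →ₐ[K] K),
      (∀ i j, Δ' (mk K m c c0 (t K m i j))
          = ∑ a, mk K m c c0 (t K m i a) ⊗ₜ[K] mk K m c c0 (t K m a j)) ∧
      (∀ i, Δ' (mk K m c c0 (b K m i))
          = (∑ a, mk K m c c0 (b K m a) ⊗ₜ[K] mk K m c c0 (t K m a i))
            + 1 ⊗ₜ[K] mk K m c c0 (b K m i)) ∧
      (∀ i j, ε' (mk K m c c0 (t K m i j)) = if i = j then 1 else 0) ∧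
      (∀ i, ε' (mk K m c c0 (b K m i)) = 0) ∧
      (Algebra.TensorProduct.assoc K K K (M K m c c0) (M K m c c0) (M K m c c0)).toAlgHom.comp
          ((Algebra.TensorProduct.map Δ' (AlgHom.id K (M K m c c0))).comp Δ')
        = (Algebra.TensorProduct.map (AlgHom.id K (M K m c c0)) Δ').comp Δ' ∧
      (Algebra.TensorProduct.lid K (M K m c c0)).toAlgHom.comp
          ((Algebra.TensorProduct.map ε' (AlgHom.id K (M K m c c0))).comp Δ')
        = AlgHom.id K (M K m c c0) ∧
      (Algebra.TensorProduct.rid K K (M K m c c0)).toAlgHom.comp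
          ((Algebra.TensorProduct.map (AlgHom.id K (M K m c c0)) ε').comp Δ')
        = AlgHom.id K (M K m c c0) := by
  exact ⟨delta_I_mem K m c c0, eps_I_mem K m c c0, D' K m c c0, E' K m c c0,
    D'_t K m c c0, D'_b K m c c0, E'_t K m c c0, E'_b K m c c0,
    coassoc K m c c0, counit_left K m c c0, counit_right K m c c0⟩

end Stmt2
end
end

section
/- Let k be a field and A a finite-dimensional unital associative k-algebra with basis e_0 = 1, e_1, …, e_m and structure constants e_i e_j = c_{ij}^0·1 + Σ_{k≥1} c_{ij}^k e_k for i,j ∈ {1,…,m}. Let M(A) be the quotient of the free k-algebra on generators b_i, t^i_j (1 ≤ i,j ≤ m) by the ideal generated by (Σ_a c_{ij}^a t^k_a) − (Σ_{a,b} c_{ab}^k t^a_i t^b_j + b_i t^k_j + t^k_i b_j) and (c_{ij}^0·1 + Σ_a c_{ij}^a b_a) − (Σ_{a,b} c_{ab}^0 t^a_i t^b_j + b_i b_j). Then: (1) the linear map β_U : A → A ⊗ M(A) determined by β_U(1) = 1 ⊗ 1 and β_U(e_i) = 1 ⊗ b_i + Σ_a e_a ⊗ t^a_i is a unital k-algebra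 homomorphism; (2) for every unital k-algebra B and every unital k-algebra homomorphism β : A → A ⊗ B there exists a unique unital k-algebra homomorphism π : M(A) → B such that β = (id ⊗ π) ∘ β_U. In particular, every coaction of a unital algebra B on A as an algebra factors through β_U (M(A) is the universal comeasuring object). -/
open scoped TensorProduct

noncomputable section
namespace Stmt3

universe u v w

variable (K : Type u) [Field K] (A : Type v) [Ring A] [Algebra K A]
  (m : ℕ) (e : Module.Basis (Fin (m + 1)) K A)
  (c : Fin m → Fin m → Fin m → K) (c0 : Fin m → Fin m → K)

/-- The free algebra on the generators `b_i` (left summand) and `t^i_j` (right summand). -/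
abbrev F : Type u := FreeAlgebra K (Fin m ⊕ Fin m × Fin m)

/-- The generator `b_i`. -/
def bgen (i : Fin m) : F K m := FreeAlgebra.ι K (Sum.inl i)

/-- The generator `t^i_j`. -/
def tgen (i j : Fin m) : F K m := FreeAlgebra.ι K (Sum.inr (i, j))

/-- The defining relations of the comeasuring bialgebra `M(A)`. -/
def rel : F K m → F K m → Prop := fun x y =>
  (∃ i j k, x = ∑ a, c i j a • tgen K m k a
      ∧ y = (∑ a, ∑ a', c a a' k • (tgen K m a i * tgen K m a' j))
          + bgen K m i * tgen K m k j + tgen K m k i * bgen K m j)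
  ∨ (∃ i j, x = c0 i j • (1 : F K m) + ∑ a, c i j a • bgen K m a
      ∧ y = (∑ a, ∑ a', c0 a a' • (tgen K m a i * tgen K m a' j))
          + bgen K m i * bgen K m j)

/-- The comeasuring bialgebra `M(A)`. -/
abbrev M : Type u := RingQuot (rel K m c c0)

/-- Image of `b_i` in `M(A)`. -/
def bb (i : Fin m) : M K m c c0 := RingQuot.mkAlgHom K (rel K m c c0) (bgen K m i)

/-- Image of `t^i_j` in `M(A)`. -/
def tt (i j : Fin m) : M K m c c0 := RingQuot.mkAlgHom K (rel K m c c0) (tgen K m i j)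

/-- The universal coaction `β_U : A → A ⊗ M(A)`, the linear map determined on the basis by
`β_U(e_0) = β_U(1) = 1 ⊗ 1` and `β_U(e_i) = 1 ⊗ b_i + Σ_a e_a ⊗ t^a_i`. -/
def βU : A →ₗ[K] A ⊗[K] M K m c c0 :=
  e.constr K (Fin.cases ((1 : A) ⊗ₜ[K] (1 : M K m c c0))
    (fun i => (1 : A) ⊗ₜ[K] bb K m c c0 i + ∑ a, e a.succ ⊗ₜ[K] tt K m c c0 a i))

variable {B : Type w} [Ring B] [Algebra K B]

/-- coordinate projection `A ⊗ B → B` along basis vector `e i`. -/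
def coordT (i : Fin (m + 1)) : A ⊗[K] B →ₗ[K] B :=
  (TensorProduct.lid K B).toLinearMap ∘ₗ TensorProduct.map (e.coord i) LinearMap.id

lemma coordT_tmul (i : Fin (m + 1)) (a : A) (b : B) :
    coordT K A m e i (a ⊗ₜ[K] b) = e.repr a i • b := by
  simp [coordT, Module.Basis.coord]

lemma sum_coordT (z : A ⊗[K] B) : ∑ i, e i ⊗ₜ[K] coordT K A m e i z = z := by
  induction z using TensorProduct.induction_on with
  | zero => simp
  | tmul a b =>
      simp only [coordT_tmul]
      calc ∑ i, e i ⊗ₜ[K] (e.repr a i • b) = ∑ i, (e.repr a i • e i) ⊗ₜ[K] b := by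
            exact Finset.sum_congr rfl fun i _ => (TensorProduct.smul_tmul _ _ _).symm
        _ = a ⊗ₜ[K] b := by rw [← TensorProduct.sum_tmul, Module.Basis.sum_repr]
  | add x y hx hy =>
      simp only [map_add, TensorProduct.tmul_add, Finset.sum_add_distrib, hx, hy]

lemma coordT_sum_tmul (f : Fin (m + 1) → B) (k : Fin (m + 1)) :
    coordT K A m e k (∑ i, e i ⊗ₜ[K] f i) = f k := by
  simp only [map_sum, coordT_tmul, Module.Basis.repr_self, Finsupp.single_apply]
  simp [ite_smul, Finset.sum_ite_eq]

lemma tmul_basis_inj {f g : Fin (m + 1) → B}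
    (h : ∑ i, e i ⊗ₜ[K] f i = ∑ i, e i ⊗ₜ[K] g i) : f = g := by
  funext k
  have := congrArg (coordT K A m e k) h
  rwa [coordT_sum_tmul, coordT_sum_tmul] at this


lemma relM1 (i j k : Fin m) :
    ∑ a, c i j a • tt K m c c0 k a
      = (∑ a, ∑ a', c a a' k • (tt K m c c0 a i * tt K m c c0 a' j))
        + bb K m c c0 i * tt K m c c0 k j + tt K m c c0 k i * bb K m c c0 j := by
  have h : rel K m c c0 (∑ a, c i j a • tgen K m k a)
      ((∑ a, ∑ a', c a a' k • (tgen K m a i * tgen K m a' j))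
        + bgen K m i * tgen K m k j + tgen K m k i * bgen K m j) :=
    Or.inl ⟨i, j, k, rfl, rfl⟩
  have := RingQuot.mkAlgHom_rel K h
  simpa [map_sum, map_add, map_mul, map_smul, bb, tt] using this

lemma relM2 (i j : Fin m) :
    c0 i j • (1 : M K m c c0) + ∑ a, c i j a • bb K m c c0 a
      = (∑ a, ∑ a', c0 a a' • (tt K m c c0 a i * tt K m c c0 a' j))
        + bb K m c c0 i * bb K m c c0 j := by
  have h : rel K m c c0 (c0 i j • (1 : F K m) + ∑ a, c i j a • bgen K m a)
      ((∑ a, ∑ a', c0 a a' • (tgen K m a i * tgen K m a' j))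
        + bgen K m i * bgen K m j) := Or.inr ⟨i, j, rfl, rfl⟩
  have := RingQuot.mkAlgHom_rel K h
  simpa [map_sum, map_add, map_mul, map_smul, bb, tt] using this

lemma βU_e0 : βU K A m e c c0 (e 0) = 1 ⊗ₜ[K] 1 := by
  simp [βU, Module.Basis.constr_basis]

lemma βU_esucc (i : Fin m) : βU K A m e c c0 (e i.succ)
    = (1 : A) ⊗ₜ[K] bb K m c c0 i + ∑ a, e a.succ ⊗ₜ[K] tt K m c c0 a i := by
  simp [βU, Module.Basis.constr_basis]


lemma coordT_ext {z w : A ⊗[K] B} (h : ∀ k, coordT K A m e k z = coordT K A m e k w) :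
    z = w := by
  rw [← sum_coordT K A m e z, ← sum_coordT K A m e w]
  exact Finset.sum_congr rfl fun k _ => by rw [h k]

lemma βU_one (he0 : e 0 = 1) : βU K A m e c c0 1 = 1 := by
  have h := βU_e0 K A m e c c0
  rw [he0] at h
  rw [h, Algebra.TensorProduct.one_def]

lemma βU_mul_basis (he0 : e 0 = 1)
    (hmul : ∀ i j : Fin m, e i.succ * e j.succ
      = algebraMap K A (c0 i j) + ∑ l, c i j l • e l.succ) (i j : Fin (m + 1)) :
    βU K A m e c c0 (e i * e j) = βU K A m e c c0 (e i) * βU K A m e c c0 (e j) := by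
  have h1 : βU K A m e c c0 (1 : A) = 1 ⊗ₜ[K] 1 := by
    rw [βU_one K A m e c c0 he0, Algebra.TensorProduct.one_def]
  have hrepr1 : e.repr (1 : A) = Finsupp.single 0 1 := by rw [← he0, e.repr_self]
  induction i using Fin.cases with
  | zero => rw [he0, one_mul, h1, ← Algebra.TensorProduct.one_def, one_mul]
  | succ i =>
    induction j using Fin.cases with
    | zero => rw [he0, mul_one, h1, ← Algebra.TensorProduct.one_def, mul_one]
    | succ j =>
      refine coordT_ext K A m e fun k => ?_
      rw [hmul i j, map_add, map_sum]
      simp only [Algebra.algebraMap_eq_smul_one, map_smul, h1, βU_esucc]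
      simp only [mul_add, add_mul, Finset.mul_sum, Finset.sum_mul,
        Algebra.TensorProduct.tmul_mul_tmul, one_mul, mul_one]
      simp only [hmul, Algebra.algebraMap_eq_smul_one]
      simp only [TensorProduct.add_tmul, TensorProduct.sum_tmul, TensorProduct.smul_tmul]
      simp only [map_add, map_sum, map_smul, coordT_tmul, hrepr1, Module.Basis.repr_self,
        Finsupp.single_apply]
      have hne : ∀ l : Fin m, ¬ (0 : Fin (m + 1)) = l.succ :=
        fun l => (Fin.succ_ne_zero l).symm
      induction k using Fin.cases with
      | zero =>
        simp only [if_true, ite_true, Fin.succ_ne_zero, ite_false, one_smul, zero_smul,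
          smul_zero, Finset.sum_const_zero, add_zero, zero_add]
        rw [relM2 K m c c0 i j, add_comm]
        congr 1
        exact Finset.sum_comm
      | succ l =>
        simp only [if_true, ite_true, Fin.succ_ne_zero, ite_false, one_smul, zero_smul,
          smul_zero, Finset.sum_const_zero, add_zero, zero_add, Fin.succ_inj, ite_smul,
          Finset.sum_ite_eq', Finset.mem_univ, Finset.sum_add_distrib]
        simp only [hne, ite_false, if_false, smul_zero, zero_smul, zero_add, add_zero,
          Finset.sum_const_zero, smul_add]
        rw [relM1 K m c c0 i j l, Finset.sum_comm]
        abel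


lemma canon (he0 : e 0 = 1) (x : B) (f : Fin m → B) :
    (1 : A) ⊗ₜ[K] x + ∑ a : Fin m, e a.succ ⊗ₜ[K] f a
      = ∑ k, e k ⊗ₜ[K] (Fin.cases x f k : B) := by
  rw [Fin.sum_univ_succ, he0]
  simp

/-- components of `β` in the basis `e`. -/
def βc (β : A →ₐ[K] A ⊗[K] B) (i j : Fin (m + 1)) : B := coordT K A m e i (β (e j))

lemma hsucc (he0 : e 0 = 1) (β : A →ₐ[K] A ⊗[K] B) (x : Fin m) : β (e x.succ)
    = (1 : A) ⊗ₜ[K] βc K A m e β 0 x.succ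
      + ∑ a : Fin m, e a.succ ⊗ₜ[K] βc K A m e β a.succ x.succ := by
  conv_lhs => rw [← sum_coordT K A m e (β (e x.succ))]
  rw [Fin.sum_univ_succ, he0]
  rfl

lemma hone (β : A →ₐ[K] A ⊗[K] B) : β 1 = (1 : A) ⊗ₜ[K] (1 : B) := by
  rw [map_one, Algebra.TensorProduct.one_def]

lemma hrel1 (he0 : e 0 = 1)
    (hmul : ∀ i j : Fin m, e i.succ * e j.succ
      = algebraMap K A (c0 i j) + ∑ l, c i j l • e l.succ)
    (β : A →ₐ[K] A ⊗[K] B) (i j k : Fin m) :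
    ∑ a, c i j a • βc K A m e β k.succ a.succ
      = (∑ a, ∑ a', c a a' k • (βc K A m e β a.succ i.succ * βc K A m e β a'.succ j.succ))
        + βc K A m e β 0 i.succ * βc K A m e β k.succ j.succ
        + βc K A m e β k.succ i.succ * βc K A m e β 0 j.succ := by
  have hrepr1 : e.repr 1 = Finsupp.single 0 1 := by rw [← he0, e.repr_self]
  have hne : ∀ l : Fin m, ¬ (0 : Fin (m + 1)) = l.succ := fun l => (Fin.succ_ne_zero l).symm
  have h : β (algebraMap K A (c0 i j) + ∑ l, c i j l • e l.succ)
      = β (e i.succ) * β (e j.succ) := by rw [← hmul, map_mul]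
  simp only [Algebra.algebraMap_eq_smul_one, map_add, map_sum, map_smul,
    hone K A β, hsucc K A m e he0 β] at h
  simp only [mul_add, add_mul, Finset.mul_sum, Finset.sum_mul,
    Algebra.TensorProduct.tmul_mul_tmul, one_mul, mul_one] at h
  simp only [hmul, Algebra.algebraMap_eq_smul_one] at h
  simp only [TensorProduct.add_tmul, TensorProduct.sum_tmul, TensorProduct.smul_tmul] at h
  have hc := congrArg (coordT K A m e k.succ) h
  simp only [map_add, map_sum, map_smul, coordT_tmul, hrepr1, Module.Basis.repr_self,
    Finsupp.single_apply] at hc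
  simp only [if_true, ite_true, Fin.succ_ne_zero, ite_false, one_smul, zero_smul,
    smul_zero, Finset.sum_const_zero, add_zero, zero_add, Fin.succ_inj, ite_smul,
    Finset.sum_ite_eq', Finset.mem_univ, Finset.sum_add_distrib] at hc
  simp only [hne, ite_false, if_false, smul_zero, zero_smul, zero_add, add_zero,
    Finset.sum_const_zero, smul_add] at hc
  rw [Finset.sum_comm] at hc
  refine hc.trans ?_
  abel

lemma hrel0 (he0 : e 0 = 1)
    (hmul : ∀ i j : Fin m, e i.succ * e j.succ
      = algebraMap K A (c0 i j) + ∑ l, c i j l • e l.succ)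
    (β : A →ₐ[K] A ⊗[K] B) (i j : Fin m) :
    c0 i j • (1 : B) + ∑ a, c i j a • βc K A m e β 0 a.succ
      = (∑ a, ∑ a', c0 a a' • (βc K A m e β a.succ i.succ * βc K A m e β a'.succ j.succ))
        + βc K A m e β 0 i.succ * βc K A m e β 0 j.succ := by
  have hrepr1 : e.repr 1 = Finsupp.single 0 1 := by rw [← he0, e.repr_self]
  have hne : ∀ l : Fin m, ¬ (0 : Fin (m + 1)) = l.succ := fun l => (Fin.succ_ne_zero l).symm
  have h : β (algebraMap K A (c0 i j) + ∑ l, c i j l • e l.succ)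
      = β (e i.succ) * β (e j.succ) := by rw [← hmul, map_mul]
  simp only [Algebra.algebraMap_eq_smul_one, map_add, map_sum, map_smul,
    hone K A β, hsucc K A m e he0 β] at h
  simp only [mul_add, add_mul, Finset.mul_sum, Finset.sum_mul,
    Algebra.TensorProduct.tmul_mul_tmul, one_mul, mul_one] at h
  simp only [hmul, Algebra.algebraMap_eq_smul_one] at h
  simp only [TensorProduct.add_tmul, TensorProduct.sum_tmul, TensorProduct.smul_tmul] at h
  have hc := congrArg (coordT K A m e 0) h
  simp only [map_add, map_sum, map_smul, coordT_tmul, hrepr1, Module.Basis.repr_self,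
    Finsupp.single_apply] at hc
  simp only [if_true, ite_true, Fin.succ_ne_zero, ite_false, one_smul, zero_smul,
    smul_zero, Finset.sum_const_zero, add_zero, zero_add] at hc
  rw [Finset.sum_comm] at hc
  refine hc.trans ?_
  abel


/-- the map on generators. -/
def fmap (β : A →ₐ[K] A ⊗[K] B) : Fin m ⊕ Fin m × Fin m → B :=
  Sum.elim (fun i => βc K A m e β 0 i.succ) (fun p => βc K A m e β p.1.succ p.2.succ)

lemma compat (he0 : e 0 = 1)
    (hmul : ∀ i j : Fin m, e i.succ * e j.succ
      = algebraMap K A (c0 i j) + ∑ l, c i j l • e l.succ)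
    (β : A →ₐ[K] A ⊗[K] B) :
    ∀ ⦃x y : F K m⦄, rel K m c c0 x y →
      FreeAlgebra.lift K (fmap K A m e β) x = FreeAlgebra.lift K (fmap K A m e β) y := by
  rintro x y (⟨i, j, k, rfl, rfl⟩ | ⟨i, j, rfl, rfl⟩) <;>
    simp only [map_add, map_sum, map_smul, map_mul, map_one, bgen, tgen,
      FreeAlgebra.lift_ι_apply, fmap, Sum.elim_inl, Sum.elim_inr]
  · exact hrel1 K A m e c c0 he0 hmul β i j k
  · exact hrel0 K A m e c c0 he0 hmul β i j

/-- the lifted algebra map `M(A) → B`. -/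
def πmap (he0 : e 0 = 1)
    (hmul : ∀ i j : Fin m, e i.succ * e j.succ
      = algebraMap K A (c0 i j) + ∑ l, c i j l • e l.succ)
    (β : A →ₐ[K] A ⊗[K] B) : M K m c c0 →ₐ[K] B :=
  RingQuot.liftAlgHom K ⟨FreeAlgebra.lift K (fmap K A m e β), compat K A m e c c0 he0 hmul β⟩

lemma πmap_bb (he0) (hmul) (β : A →ₐ[K] A ⊗[K] B) (i : Fin m) :
    πmap K A m e c c0 he0 hmul β (bb K m c c0 i) = βc K A m e β 0 i.succ := by
  rw [bb, πmap, RingQuot.liftAlgHom_mkAlgHom_apply]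
  simp [bgen, FreeAlgebra.lift_ι_apply, fmap]

lemma πmap_tt (he0) (hmul) (β : A →ₐ[K] A ⊗[K] B) (a i : Fin m) :
    πmap K A m e c c0 he0 hmul β (tt K m c c0 a i) = βc K A m e β a.succ i.succ := by
  rw [tt, πmap, RingQuot.liftAlgHom_mkAlgHom_apply]
  simp [tgen, FreeAlgebra.lift_ι_apply, fmap]

lemma fact_iff (he0 : e 0 = 1) (β : A →ₐ[K] A ⊗[K] B) (π' : M K m c c0 →ₐ[K] B)
    (hb : ∀ i, π' (bb K m c c0 i) = βc K A m e β 0 i.succ)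
    (ht : ∀ a i, π' (tt K m c c0 a i) = βc K A m e β a.succ i.succ) :
    β.toLinearMap
      = (Algebra.TensorProduct.map (AlgHom.id K A) π').toLinearMap ∘ₗ βU K A m e c c0 := by
  refine e.ext fun k => ?_
  induction k using Fin.cases with
  | zero =>
      simp only [AlgHom.toLinearMap_apply, LinearMap.comp_apply, βU_e0,
        Algebra.TensorProduct.map_tmul, map_one, AlgHom.coe_id, id_eq]
      rw [he0, hone K A β]
  | succ j =>
      simp only [AlgHom.toLinearMap_apply, LinearMap.comp_apply, βU_esucc, map_add, map_sum,
        Algebra.TensorProduct.map_tmul, AlgHom.coe_id, id_eq, hb, ht]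
      exact hsucc K A m e he0 β j

lemma uniq_vals (he0 : e 0 = 1) (β : A →ₐ[K] A ⊗[K] B) (π' : M K m c c0 →ₐ[K] B)
    (hfac : β.toLinearMap
      = (Algebra.TensorProduct.map (AlgHom.id K A) π').toLinearMap ∘ₗ βU K A m e c c0)
    (j : Fin m) :
    π' (bb K m c c0 j) = βc K A m e β 0 j.succ
      ∧ ∀ a : Fin m, π' (tt K m c c0 a j) = βc K A m e β a.succ j.succ := by
  have h : β (e j.succ)
      = (1 : A) ⊗ₜ[K] π' (bb K m c c0 j)
        + ∑ a : Fin m, e a.succ ⊗ₜ[K] π' (tt K m c c0 a j) := by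
    have h0 := congrArg (fun L : A →ₗ[K] A ⊗[K] B => L (e j.succ)) hfac
    simpa [βU_esucc, Algebra.TensorProduct.map_tmul, map_add, map_sum] using h0
  rw [hsucc K A m e he0 β j, canon K A m e he0, canon K A m e he0] at h
  have hfg := tmul_basis_inj K A m e h
  constructor
  · have h0 := congrFun hfg 0
    simpa using h0.symm
  · intro a
    have h0 := congrFun hfg a.succ
    simpa using h0.symm


theorem universal_comeasuring
    (he0 : e 0 = 1)
    (hmul : ∀ i j : Fin m, e i.succ * e j.succ
      = algebraMap K A (c0 i j) + ∑ l, c i j l • e l.succ) :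
    -- (1) β_U is a unital algebra homomorphism
    (βU K A m e c c0 1 = 1 ∧
      ∀ x y : A, βU K A m e c c0 (x * y) = βU K A m e c c0 x * βU K A m e c c0 y) ∧
    -- (2) universal property: every comeasuring factors uniquely through β_U
    (∀ (B : Type w) [Ring B] [Algebra K B] (β : A →ₐ[K] A ⊗[K] B),
      ∃! π : M K m c c0 →ₐ[K] B,
        β.toLinearMap
          = (Algebra.TensorProduct.map (AlgHom.id K A) π).toLinearMap ∘ₗ βU K A m e c c0) := by
  refine ⟨⟨βU_one K A m e c c0 he0, ?_⟩, ?_⟩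
  · have hL : ((LinearMap.mul K A).compr₂ (βU K A m e c c0))
        = (LinearMap.mul K (A ⊗[K] M K m c c0)).compl₁₂ (βU K A m e c c0) (βU K A m e c c0) :=
      LinearMap.ext_basis e e fun i j => by
        simpa [LinearMap.compr₂_apply, LinearMap.compl₁₂_apply] using
          βU_mul_basis K A m e c c0 he0 hmul i j
    intro x y
    have h := LinearMap.congr_fun (LinearMap.congr_fun hL x) y
    simpa [LinearMap.compr₂_apply, LinearMap.compl₁₂_apply] using h
  · intro B _ _ β
    refine ⟨πmap K A m e c c0 he0 hmul β,
      fact_iff K A m e c c0 he0 β _ (πmap_bb K A m e c c0 he0 hmul β)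
        (πmap_tt K A m e c c0 he0 hmul β), ?_⟩
    intro π' hfac
    refine RingQuot.ringQuot_ext' K _ _ (FreeAlgebra.hom_ext (funext fun x => ?_))
    rcases x with i | ⟨a, i⟩
    · have h1 := (uniq_vals K A m e c c0 he0 β π' hfac i).1
      have h2 := πmap_bb K A m e c c0 he0 hmul β i
      simpa [bb, bgen] using h1.trans h2.symm
    · have h1 := (uniq_vals K A m e c c0 he0 β π' hfac i).2 a
      have h2 := πmap_tt K A m e c c0 he0 hmul β a i
      simpa [tt, tgen] using h1.trans h2.symm

end Stmt3
end
end

section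
/- Let F be the free ℂ-algebra on generators t_i indexed by i ∈ ℕ, i ≥ 1. For i, j ≥ 1 define T(i,j) = Σ t_{n₁} t_{n₂} ⋯ t_{n_j}, the sum over all compositions (n₁,…,n_j) of i into j positive parts (n_s ≥ 1, n₁ + ⋯ + n_j = i). Let Δ : F → F ⊗ F be the unique ℂ-algebra homomorphism with Δ(t_i) = Σ_{j=1}^{i} T(i,j) ⊗ t_j and ε : F → ℂ the unique algebra homomorphism with ε(t_i) = δ_{i,1}. Then Δ(T(i,j)) = Σ_{k=j}^{i} T(i,k) ⊗ T(k,j) for all i ≥ j ≥ 1, and (F, Δ, ε) is a bialgebra: (Δ ⊗ id)∘Δ = (id ⊗ Δ)∘Δ and (ε ⊗ id)∘Δ = id = (id ⊗ ε)∘Δ. (This is the restricted comeasuring bialgebra M₀(ℂ[x]), a noncommutative version of the bialgebra of polynomial diffeomorphisms of the line fixing the origin.) -/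
open scoped TensorProduct

noncomputable section
namespace Stmt6

/-- The free ℂ-algebra on generators `t_i`, `i ≥ 1`. -/
abbrev F : Type := FreeAlgebra ℂ ℕ+

/-- The generator `t_i` (for `i ≥ 1`). -/
def t (i : ℕ+) : F := FreeAlgebra.ι ℂ i

/-- `T(i,j) = Σ t_{n₁} ⋯ t_{n_j}`, the sum over all compositions `(n₁,…,n_j)` of `i`
into `j` positive parts of the corresponding ordered products of generators. -/
def T (i j : ℕ) : F :=
  ∑ c ∈ Finset.univ.filter (fun c : Composition i => c.length = j),
    (c.blocks.attach.map (fun p => t ⟨p.1, c.blocks_pos p.2⟩)).prod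

/-- The coproduct: the unique algebra map with `Δ(t_i) = Σ_{j=1}^{i} T(i,j) ⊗ t_j`. -/
def Δ : F →ₐ[ℂ] F ⊗[ℂ] F :=
  FreeAlgebra.lift ℂ (fun i : ℕ+ =>
    ∑ j ∈ (Finset.Icc 1 (i : ℕ)).attach,
      T (i : ℕ) j.1 ⊗ₜ[ℂ] t ⟨j.1, (Finset.mem_Icc.mp j.2).1⟩)

/-- The counit: the unique algebra map with `ε(t_i) = δ_{i,1}`. -/
def ε : F →ₐ[ℂ] ℂ :=
  FreeAlgebra.lift ℂ (fun i : ℕ+ => if i = 1 then (1 : ℂ) else 0)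



/-- Total version of the generator. -/
def u (n : ℕ) : F := if h : 0 < n then t ⟨n, h⟩ else 0

lemma u_pos {n : ℕ} (h : 0 < n) : u n = t ⟨n, h⟩ := dif_pos h

/-- Product of generators over the blocks of a composition. -/
def P {i : ℕ} (c : Composition i) : F := (c.blocks.map u).prod

lemma T_eq (i j : ℕ) :
    T i j = ∑ c ∈ Finset.univ.filter (fun c : Composition i => c.length = j), P c := by
  refine Finset.sum_congr rfl fun c _ => ?_
  unfold P
  rw [← List.attach_map_val (l := c.blocks) (f := u)]
  congr 1
  exact List.map_congr_left fun p _ => (u_pos (c.blocks_pos p.2)).symm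

lemma T_eq_zero {i j : ℕ} (h : i < j) : T i j = 0 := by
  rw [T_eq]
  refine Finset.sum_eq_zero fun c hc => ?_
  exfalso
  rw [Finset.mem_filter] at hc
  exact absurd (hc.2 ▸ c.length_le) (not_le.mpr h)

lemma T_one {i : ℕ} (h : 0 < i) : T i 1 = u i := by
  rw [T_eq]
  have : Finset.univ.filter (fun c : Composition i => c.length = 1)
      = {Composition.single i h} := by
    ext c
    simp [Finset.mem_filter, ← Composition.eq_single_iff_length h]
  rw [this, Finset.sum_singleton]
  simp [P, Composition.single, u_pos h]

lemma Δu {n : ℕ} (h : 0 < n) : Δ (u n) = ∑ j ∈ Finset.Icc 1 n, T n j ⊗ₜ[ℂ] u j := by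
  rw [u_pos h]
  unfold Δ t
  erw [FreeAlgebra.lift_ι_apply]
  rw [← Finset.sum_attach (Finset.Icc 1 n) (fun j => T n j ⊗ₜ[ℂ] u j)]
  refine Finset.sum_congr rfl fun j _ => ?_
  congr 1
  exact (u_pos (Finset.mem_Icc.mp j.2).1).symm

lemma Δu_comp {n : ℕ} (h : 0 < n) :
    Δ (u n) = ∑ d : Composition n, P d ⊗ₜ[ℂ] u d.length := by
  rw [Δu h]
  rw [← Finset.sum_fiberwise_of_maps_to
    (g := fun d : Composition n => d.length) (t := Finset.Icc 1 n)
    (fun d _ => Finset.mem_Icc.mpr ⟨d.length_pos_of_pos h, d.length_le⟩)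
    (fun d => P d ⊗ₜ[ℂ] u d.length)]
  refine Finset.sum_congr rfl fun j _ => ?_
  rw [T_eq, TensorProduct.sum_tmul]
  refine Finset.sum_congr rfl fun d hd => ?_
  rw [Finset.mem_filter] at hd
  rw [hd.2]



lemma list_prod_tmul (l : List (F × F)) :
    (l.map fun p => p.1 ⊗ₜ[ℂ] p.2).prod = (l.map Prod.fst).prod ⊗ₜ[ℂ] (l.map Prod.snd).prod := by
  induction l with
  | nil => simp [Algebra.TensorProduct.one_def]
  | cons a l ih => simp [ih, Algebra.TensorProduct.tmul_mul_tmul]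

lemma ofFn_tmul {n : ℕ} (f g : Fin n → F) :
    (List.ofFn fun s => f s ⊗ₜ[ℂ] g s).prod
      = (List.ofFn f).prod ⊗ₜ[ℂ] (List.ofFn g).prod := by
  have := list_prod_tmul (List.ofFn fun s => (f s, g s))
  simpa [List.map_ofFn, Function.comp_def] using this

lemma prod_ofFn_sum {n : ℕ} {β : Fin n → Type*} [∀ s, Fintype (β s)]
    {M : Type*} [Semiring M] (f : ∀ s : Fin n, β s → M) :
    (List.ofFn fun s => ∑ x : β s, f s x).prod
      = ∑ D : (∀ s, β s), (List.ofFn fun s => f s (D s)).prod := by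
  classical
  induction n with
  | zero => simp
  | succ n ih =>
    rw [List.ofFn_succ, List.prod_cons, ih (fun s x => f s.succ x), Finset.sum_mul_sum]
    rw [← (Fin.consEquiv β).sum_comp]
    rw [Fintype.sum_prod_type]
    refine Finset.sum_congr rfl fun x _ => Finset.sum_congr rfl fun D _ => ?_
    rw [List.ofFn_succ, List.prod_cons]
    simp [Fin.consEquiv]

lemma ofFn_getElem_map {α β : Type*} (ll : List α) (g : α → β) {N : ℕ} (hN : N = ll.length) :
    (List.ofFn fun s : Fin N => g (ll[(s : ℕ)]'(hN ▸ s.2))) = ll.map g := by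
  subst hN
  rw [show (fun s : Fin ll.length => g ll[(s : ℕ)]) = g ∘ (fun s : Fin ll.length => ll[(s:ℕ)])
    from rfl, ← List.map_ofFn, List.ofFn_getElem]


lemma blocksFun_pos {i : ℕ} (c : Composition i) (s : Fin c.length) : 0 < c.blocksFun s :=
  c.blocks_pos (List.getElem_mem _)

lemma P_ofFn {i : ℕ} (c : Composition i) :
    P c = (List.ofFn fun s => u (c.blocksFun s)).prod := by
  unfold P
  rw [← Composition.ofFn_blocksFun c, List.map_ofFn]
  rfl

lemma ΔP {i : ℕ} (c : Composition i) :
    Δ (P c) = ∑ D : (∀ s : Fin c.length, Composition (c.blocksFun s)),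
      (List.ofFn fun s => P (D s)).prod ⊗ₜ[ℂ] (List.ofFn fun s => u (D s).length).prod := by
  rw [P_ofFn, map_list_prod, List.map_ofFn]
  have h1 : (Δ ∘ fun s => u (c.blocksFun s))
      = fun s => ∑ d : Composition (c.blocksFun s), P d ⊗ₜ[ℂ] u d.length := by
    funext s
    exact Δu_comp (blocksFun_pos c s)
  rw [h1, prod_ofFn_sum]
  exact Finset.sum_congr rfl fun D _ =>
    ofFn_tmul (fun s => P (D s)) (fun s => u (D s).length)

lemma key_prod {i : ℕ} (a : Composition i) (b : Composition a.length) :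
    (List.ofFn fun s : Fin (a.gather b).length => P (a.sigmaCompositionAux b s)).prod = P a := by
  have hN : (a.gather b).length = (a.blocks.splitWrtComposition b).length := by
    rw [Composition.length_gather, List.length_splitWrtComposition]
  have h1 : (List.ofFn fun s : Fin (a.gather b).length => P (a.sigmaCompositionAux b s))
      = (a.blocks.splitWrtComposition b).map (fun L => (L.map u).prod) :=
    ofFn_getElem_map (a.blocks.splitWrtComposition b) (fun L => (L.map u).prod) hN
  rw [h1, show (fun L => (List.map u L).prod) = List.prod ∘ (List.map u) from rfl,
    ← List.map_map, ← List.prod_flatten, ← List.map_flatten,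
    List.flatten_splitWrtComposition]
  rfl

lemma key_len {i : ℕ} (a : Composition i) (b : Composition a.length) :
    (List.ofFn fun s : Fin (a.gather b).length => u (a.sigmaCompositionAux b s).length).prod
      = P b := by
  have hN : (a.gather b).length = (a.blocks.splitWrtComposition b).length := by
    rw [Composition.length_gather, List.length_splitWrtComposition]
  have h1 : (List.ofFn fun s : Fin (a.gather b).length => u (a.sigmaCompositionAux b s).length)
      = (a.blocks.splitWrtComposition b).map (fun L => u L.length) :=
    ofFn_getElem_map (a.blocks.splitWrtComposition b) (fun L => u L.length) hN
  rw [h1, show (fun L : List ℕ => u L.length) = u ∘ List.length from rfl,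
    ← List.map_map, List.map_length_splitWrtComposition]
  rfl

lemma Delta_T {i j : ℕ} (hj : 1 ≤ j) (hji : j ≤ i) :
    Δ (T i j) = ∑ k ∈ Finset.Icc j i, T i k ⊗ₜ[ℂ] T k j := by
  classical
  have hi : 0 < i := lt_of_lt_of_le hj hji
  set g : (Σ c : Composition i, ∀ s : Fin c.length, Composition (c.blocksFun s)) → F ⊗[ℂ] F :=
    fun x => if x.1.length = j then
      (List.ofFn fun s => P (x.2 s)).prod ⊗ₜ[ℂ] (List.ofFn fun s => u (x.2 s).length).prod
      else 0 with hg
  have step1 : Δ (T i j) = ∑ x : (Σ c : Composition i, ∀ s : Fin c.length,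
      Composition (c.blocksFun s)), g x := by
    rw [T_eq, map_sum, Finset.sum_filter, ← Finset.univ_sigma_univ, Finset.sum_sigma]
    refine Finset.sum_congr rfl fun c _ => ?_
    by_cases hc : c.length = j
    · rw [if_pos hc, ΔP]
      exact Finset.sum_congr rfl fun D _ => (if_pos hc).symm
    · rw [if_neg hc]
      exact (Finset.sum_eq_zero fun D _ => if_neg hc).symm
  have step2 : ∑ x : (Σ c : Composition i, ∀ s : Fin c.length,
      Composition (c.blocksFun s)), g x
      = ∑ y : (Σ a : Composition i, Composition a.length), g (Composition.sigmaEquivSigmaPi i y) :=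
    (Equiv.sum_comp (Composition.sigmaEquivSigmaPi i) g).symm
  have step3 : ∀ (a : Composition i) (b : Composition a.length),
      g (Composition.sigmaEquivSigmaPi i ⟨a, b⟩)
        = if b.length = j then P a ⊗ₜ[ℂ] P b else 0 := by
    intro a b
    have he : g ⟨a.gather b, a.sigmaCompositionAux b⟩
        = if b.length = j then P a ⊗ₜ[ℂ] P b else 0 := by
      show (if (a.gather b).length = j then
          (List.ofFn fun s => P (a.sigmaCompositionAux b s)).prod ⊗ₜ[ℂ]
            (List.ofFn fun s => u (a.sigmaCompositionAux b s).length).prod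
        else 0) = _
      by_cases hbj : b.length = j
      · rw [if_pos (by rw [Composition.length_gather]; exact hbj), if_pos hbj,
          key_prod, key_len]
      · rw [if_neg (by rw [Composition.length_gather]; exact hbj), if_neg hbj]
    exact he
  have step4 : Δ (T i j) = ∑ a : Composition i, P a ⊗ₜ[ℂ] T a.length j := by
    rw [step1, step2, ← Finset.univ_sigma_univ, Finset.sum_sigma]
    refine Finset.sum_congr rfl fun a _ => ?_
    simp only [step3]
    rw [T_eq, TensorProduct.tmul_sum, Finset.sum_filter]
  rw [step4, ← Finset.sum_fiberwise_of_maps_to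
    (g := fun a : Composition i => a.length) (t := Finset.Icc 1 i)
    (fun a _ => Finset.mem_Icc.mpr ⟨a.length_pos_of_pos hi, a.length_le⟩)
    (fun a => P a ⊗ₜ[ℂ] T a.length j)]
  have step5 : ∀ k ∈ Finset.Icc 1 i,
      (∑ a ∈ Finset.univ.filter (fun a : Composition i => a.length = k),
        P a ⊗ₜ[ℂ] T a.length j) = T i k ⊗ₜ[ℂ] T k j := by
    intro k _
    rw [T_eq i k, TensorProduct.sum_tmul]
    refine Finset.sum_congr rfl fun a ha => ?_
    rw [(Finset.mem_filter.mp ha).2]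
  rw [Finset.sum_congr rfl step5]
  refine (Finset.sum_subset (Finset.Icc_subset_Icc_left hj) fun k hk hk' => ?_).symm
  simp only [Finset.mem_Icc] at hk hk'
  have : k < j := by omega
  rw [T_eq_zero this, TensorProduct.tmul_zero]


lemma εu (n : ℕ) : ε (u n) = if n = 1 then 1 else 0 := by
  unfold u
  rcases Nat.eq_zero_or_pos n with h | h
  · subst h; simp
  · rw [dif_pos h]
    unfold t ε
    erw [FreeAlgebra.lift_ι_apply]
    congr 1
    exact propext (PNat.coe_inj (m := ⟨n, h⟩) (n := 1)).symm

lemma prod_ite_ones (l : List ℕ) :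
    (l.map fun n => if n = 1 then (1 : ℂ) else 0).prod
      = if (∀ n ∈ l, n = 1) then 1 else 0 := by
  induction l with
  | nil => simp
  | cons a l ih =>
    rw [List.map_cons, List.prod_cons, ih]
    by_cases ha : a = 1 <;> by_cases hl : ∀ n ∈ l, n = 1 <;>
      simp [ha, hl]

open scoped Classical in
lemma εP {i : ℕ} (c : Composition i) :
    ε (P c) = if c = Composition.ones i then 1 else 0 := by
  unfold P
  rw [map_list_prod, List.map_map]
  have h1 : (⇑ε ∘ u) = fun n => if n = 1 then (1 : ℂ) else 0 := funext fun n => εu n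
  rw [h1, prod_ite_ones]
  exact if_congr Composition.eq_ones_iff.symm rfl rfl

open scoped Classical in
lemma εT (i j : ℕ) : ε (T i j) = if i = j then 1 else 0 := by
  rw [T_eq, map_sum]
  rw [Finset.sum_congr rfl fun c _ => εP c]
  rw [Finset.sum_ite_eq' _ (Composition.ones i) (fun _ => (1 : ℂ))]
  have hmem : Composition.ones i ∈
      Finset.filter (fun c : Composition i => c.length = j) Finset.univ ↔ i = j := by
    simp [Composition.ones_length]
  by_cases h : i = j
  · rw [if_pos (hmem.mpr h), if_pos h]
  · rw [if_neg (fun hc => h (hmem.mp hc)), if_neg h]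

lemma t_eq_u (x : ℕ+) : t x = u (x : ℕ) := by
  unfold u
  rw [dif_pos x.pos]
  rfl

lemma Δt (x : ℕ+) :
    Δ (t x) = ∑ j ∈ Finset.Icc 1 (x : ℕ), T (x : ℕ) j ⊗ₜ[ℂ] u j := by
  rw [t_eq_u, Δu x.pos]

theorem restricted_comeasuring_bialgebra :
    -- Δ(T(i,j)) = Σ_{k=j}^{i} T(i,k) ⊗ T(k,j)
    (∀ i j : ℕ, 1 ≤ j → j ≤ i →
      Δ (T i j) = ∑ k ∈ Finset.Icc j i, T i k ⊗ₜ[ℂ] T k j) ∧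
    -- coassociativity
    (Algebra.TensorProduct.assoc ℂ ℂ ℂ F F F).toAlgHom.comp
        ((Algebra.TensorProduct.map Δ (AlgHom.id ℂ F)).comp Δ)
      = (Algebra.TensorProduct.map (AlgHom.id ℂ F) Δ).comp Δ ∧
    -- counit laws
    (Algebra.TensorProduct.lid ℂ F).toAlgHom.comp
        ((Algebra.TensorProduct.map ε (AlgHom.id ℂ F)).comp Δ) = AlgHom.id ℂ F ∧
    (Algebra.TensorProduct.rid ℂ ℂ F).toAlgHom.comp
        ((Algebra.TensorProduct.map (AlgHom.id ℂ F) ε).comp Δ) = AlgHom.id ℂ F := by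
  refine ⟨fun i j hj hij => Delta_T hj hij, ?_, ?_, ?_⟩
  · apply FreeAlgebra.hom_ext
    funext x
    show (Algebra.TensorProduct.assoc ℂ ℂ ℂ F F F)
        ((Algebra.TensorProduct.map Δ (AlgHom.id ℂ F)) (Δ (t x)))
      = (Algebra.TensorProduct.map (AlgHom.id ℂ F) Δ) (Δ (t x))
    rw [Δt, map_sum, map_sum, map_sum]
    have hL : ∀ j ∈ Finset.Icc 1 (x : ℕ),
        (Algebra.TensorProduct.assoc ℂ ℂ ℂ F F F)
            ((Algebra.TensorProduct.map Δ (AlgHom.id ℂ F)) (T (x : ℕ) j ⊗ₜ[ℂ] u j))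
          = ∑ k ∈ Finset.Icc 1 (x : ℕ),
              T (x : ℕ) k ⊗ₜ[ℂ] (T k j ⊗ₜ[ℂ] u j) := by
      intro j hj
      rw [Finset.mem_Icc] at hj
      rw [Algebra.TensorProduct.map_tmul, AlgHom.coe_id, id_eq, Delta_T hj.1 hj.2,
        TensorProduct.sum_tmul, map_sum]
      simp only [Algebra.TensorProduct.assoc_tmul]
      refine Finset.sum_subset (Finset.Icc_subset_Icc_left hj.1) fun k hk hk' => ?_
      simp only [Finset.mem_Icc] at hk hk'
      rw [T_eq_zero (show k < j by omega), TensorProduct.zero_tmul, TensorProduct.tmul_zero]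
    have hR : ∀ k ∈ Finset.Icc 1 (x : ℕ),
        (Algebra.TensorProduct.map (AlgHom.id ℂ F) Δ) (T (x : ℕ) k ⊗ₜ[ℂ] u k)
          = ∑ j ∈ Finset.Icc 1 (x : ℕ),
              T (x : ℕ) k ⊗ₜ[ℂ] (T k j ⊗ₜ[ℂ] u j) := by
      intro k hk
      rw [Finset.mem_Icc] at hk
      rw [Algebra.TensorProduct.map_tmul, AlgHom.coe_id, id_eq, Δu hk.1,
        TensorProduct.tmul_sum]
      refine Finset.sum_subset (Finset.Icc_subset_Icc_right hk.2) fun j hj hj' => ?_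
      simp only [Finset.mem_Icc] at hj hj'
      rw [T_eq_zero (show k < j by omega), TensorProduct.zero_tmul, TensorProduct.tmul_zero]
    rw [Finset.sum_congr rfl hL, Finset.sum_congr rfl hR, Finset.sum_comm]
  · apply FreeAlgebra.hom_ext
    funext x
    show (Algebra.TensorProduct.lid ℂ F)
        ((Algebra.TensorProduct.map ε (AlgHom.id ℂ F)) (Δ (t x))) = t x
    rw [Δt, map_sum, map_sum]
    have h1 : ∀ j ∈ Finset.Icc 1 (x : ℕ),
        (Algebra.TensorProduct.lid ℂ F)
            ((Algebra.TensorProduct.map ε (AlgHom.id ℂ F)) (T (x : ℕ) j ⊗ₜ[ℂ] u j))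
          = if (x : ℕ) = j then u j else 0 := by
      intro j hj
      rw [Algebra.TensorProduct.map_tmul, AlgHom.coe_id, id_eq,
        Algebra.TensorProduct.lid_tmul, εT]
      split_ifs <;> simp
    rw [Finset.sum_congr rfl h1, Finset.sum_ite_eq (Finset.Icc 1 (x : ℕ)) (x : ℕ) u]
    rw [if_pos (Finset.mem_Icc.mpr ⟨x.pos, le_rfl⟩)]
    exact (t_eq_u x).symm
  · apply FreeAlgebra.hom_ext
    funext x
    show (Algebra.TensorProduct.rid ℂ ℂ F)
        ((Algebra.TensorProduct.map (AlgHom.id ℂ F) ε) (Δ (t x))) = t x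
    rw [Δt, map_sum, map_sum]
    have h1 : ∀ j ∈ Finset.Icc 1 (x : ℕ),
        (Algebra.TensorProduct.rid ℂ ℂ F)
            ((Algebra.TensorProduct.map (AlgHom.id ℂ F) ε) (T (x : ℕ) j ⊗ₜ[ℂ] u j))
          = if j = 1 then T (x : ℕ) j else 0 := by
      intro j hj
      rw [Algebra.TensorProduct.map_tmul, AlgHom.coe_id, id_eq,
        Algebra.TensorProduct.rid_tmul, εu]
      split_ifs <;> simp
    rw [Finset.sum_congr rfl h1,
      Finset.sum_ite_eq' (Finset.Icc 1 (x : ℕ)) 1 (fun j => T (x : ℕ) j)]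
    rw [if_pos (Finset.mem_Icc.mpr ⟨le_rfl, x.pos⟩), T_one x.pos]
    exact (t_eq_u x).symm


end Stmt6
end
end

section
/- Let F = ℂ⟨b,t⟩ be the free ℂ-algebra on two generators b, t, and let I be the two-sided ideal generated by (b+t)² − 1 and (b−t)² − 1 (equivalently by b² + t² − 1 and bt + tb). Let Δ : F → F ⊗ F and ε : F → ℂ be the unique algebra homomorphisms with Δ(t) = t ⊗ t, Δ(b) = 1 ⊗ b + b ⊗ t, ε(t) = 1, ε(b) = 0. Then Δ(I) ⊆ I ⊗ F + F ⊗ I and ε(I) = 0, so the quotient M = F/I is a ℂ-bialgebra; moreover the map β : ℂ[x]/(x² − 1) → (ℂ[x]/(x² − 1)) ⊗ M determined by β(1) = 1 ⊗ 1, β(x) = 1 ⊗ b + x ⊗ t is a unital algebra homomorphism satisfying (β ⊗ id)∘β = (id ⊗ Δ)∘β and (id ⊗ ε)∘β = id. (M is the comeasuring bialgebra of the algebra ℂ[x]/(x² = 1) ≅ ℂℤ₂.) -/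
open scoped TensorProduct

noncomputable section
namespace Stmt8

/-- The free ℂ-algebra on the two generators `b`, `t`. -/
abbrev F : Type := FreeAlgebra ℂ (Fin 2)

/-- The generator `b`. -/
def b : F := FreeAlgebra.ι ℂ 0

/-- The generator `t`. -/
def t : F := FreeAlgebra.ι ℂ 1

/-- The two-sided ideal generated by `(b+t)² − 1` and `(b−t)² − 1`. -/
def I : TwoSidedIdeal F := TwoSidedIdeal.span {(b + t) ^ 2 - 1, (b - t) ^ 2 - 1}

/-- The coproduct: the unique algebra map with `Δ(b) = 1 ⊗ b + b ⊗ t`, `Δ(t) = t ⊗ t`. -/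
def Δ : F →ₐ[ℂ] F ⊗[ℂ] F :=
  FreeAlgebra.lift ℂ (fun i : Fin 2 =>
    if i = 0 then (1 : F) ⊗ₜ[ℂ] b + b ⊗ₜ[ℂ] t else t ⊗ₜ[ℂ] t)

/-- The counit: the unique algebra map with `ε(b) = 0`, `ε(t) = 1`. -/
def ε : F →ₐ[ℂ] ℂ := FreeAlgebra.lift ℂ (fun i : Fin 2 => if i = 0 then (0 : ℂ) else 1)

/-- The subspace `I ⊗ F + F ⊗ I` of `F ⊗ F`. -/
def J : Submodule ℂ (F ⊗[ℂ] F) :=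
  Submodule.span ℂ
    ({z | ∃ x ∈ I, ∃ y, z = x ⊗ₜ[ℂ] y} ∪ {z | ∃ x, ∃ y ∈ I, z = x ⊗ₜ[ℂ] y})

/-- The relation whose `RingQuot` is `M = F/I`. -/
def rel : F → F → Prop := fun x y =>
  (x = (b + t) ^ 2 ∧ y = 1) ∨ (x = (b - t) ^ 2 ∧ y = 1)

/-- The comeasuring bialgebra `M` of `ℂ[x]/(x² = 1)`. -/
abbrev M : Type := RingQuot rel

/-- The image of `b` in `M`. -/
def bb : M := RingQuot.mkAlgHom ℂ rel b

/-- The image of `t` in `M`. -/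
def tt : M := RingQuot.mkAlgHom ℂ rel t

/-- The algebra `A = ℂ[x]/(x² − 1)`. -/
abbrev A : Type := Polynomial ℂ ⧸ Ideal.span {(Polynomial.X : Polynomial ℂ) ^ 2 - 1}

/-- The image of `x` in `A`. -/
def x : A := Ideal.Quotient.mk _ Polynomial.X

set_option synthInstance.maxHeartbeats 1000000
set_option maxHeartbeats 1000000

lemma hg1 : (b + t) ^ 2 - 1 ∈ I := TwoSidedIdeal.subset_span (by left; rfl)
lemma hg2 : (b - t) ^ 2 - 1 ∈ I := TwoSidedIdeal.subset_span (by right; rfl)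

lemma Δb : Δ b = (1 : F) ⊗ₜ[ℂ] b + b ⊗ₜ[ℂ] t := by simp [Δ, b]
lemma Δt : Δ t = t ⊗ₜ[ℂ] t := by simp [Δ, t]
lemma εb : ε b = 0 := by simp [ε, b]
lemma εt : ε t = 1 := by simp [ε, t]

lemma c_mem : b * b + t * t - 1 ∈ I := by
  have h : b * b + t * t - 1 =
      (algebraMap ℂ F 2⁻¹) * ((b + t) ^ 2 - 1 + ((b - t) ^ 2 - 1)) := by
    rw [show (b + t) ^ 2 - 1 + ((b - t) ^ 2 - 1)
        = (2:ℂ) • (b * b + t * t - 1) by rw [two_smul]; noncomm_ring,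
      Algebra.smul_def, ← mul_assoc, ← map_mul]
    norm_num
  rw [h]
  exact I.mul_mem_left _ _ (I.add_mem hg1 hg2)

lemma d_mem : b * t + t * b ∈ I := by
  have h : b * t + t * b =
      (algebraMap ℂ F 2⁻¹) * ((b + t) ^ 2 - 1 - ((b - t) ^ 2 - 1)) := by
    rw [show (b + t) ^ 2 - 1 - ((b - t) ^ 2 - 1)
        = (2:ℂ) • (b * t + t * b) by rw [two_smul]; noncomm_ring,
      Algebra.smul_def, ← mul_assoc, ← map_mul]
    norm_num
  rw [h]
  exact I.mul_mem_left _ _ (I.sub_mem hg1 hg2)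

lemma left_mem_J {p : F} (hp : p ∈ I) (q : F) : p ⊗ₜ[ℂ] q ∈ J :=
  Submodule.subset_span (Or.inl ⟨p, hp, q, rfl⟩)
lemma right_mem_J (p : F) {q : F} (hq : q ∈ I) : p ⊗ₜ[ℂ] q ∈ J :=
  Submodule.subset_span (Or.inr ⟨p, q, hq, rfl⟩)

lemma mul_mem_J (w : F ⊗[ℂ] F) {u : F ⊗[ℂ] F} (hu : u ∈ J) : w * u ∈ J := by
  induction hu using Submodule.span_induction with
  | mem z hz =>
    induction w using TensorProduct.induction_on with
    | zero => simpa using J.zero_mem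
    | tmul a c =>
      rcases hz with ⟨p, hp, q, rfl⟩ | ⟨p, q, hq, rfl⟩
      · rw [Algebra.TensorProduct.tmul_mul_tmul]
        exact left_mem_J (I.mul_mem_left _ _ hp) _
      · rw [Algebra.TensorProduct.tmul_mul_tmul]
        exact right_mem_J _ (I.mul_mem_left _ _ hq)
    | add w₁ w₂ h₁ h₂ => rw [add_mul]; exact J.add_mem h₁ h₂
  | zero => simpa using J.zero_mem
  | add a c _ _ ha hc => rw [mul_add]; exact J.add_mem ha hc
  | smul r a _ ha => rw [mul_smul_comm]; exact J.smul_mem r ha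

lemma mem_J_mul (w : F ⊗[ℂ] F) {u : F ⊗[ℂ] F} (hu : u ∈ J) : u * w ∈ J := by
  induction hu using Submodule.span_induction with
  | mem z hz =>
    induction w using TensorProduct.induction_on with
    | zero => simpa using J.zero_mem
    | tmul a c =>
      rcases hz with ⟨p, hp, q, rfl⟩ | ⟨p, q, hq, rfl⟩
      · rw [Algebra.TensorProduct.tmul_mul_tmul]
        exact left_mem_J (I.mul_mem_right _ _ hp) _
      · rw [Algebra.TensorProduct.tmul_mul_tmul]
        exact right_mem_J _ (I.mul_mem_right _ _ hq)
    | add w₁ w₂ h₁ h₂ => rw [mul_add]; exact J.add_mem h₁ h₂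
  | zero => simpa using J.zero_mem
  | add a c _ _ ha hc => rw [add_mul]; exact J.add_mem ha hc
  | smul r a _ ha => rw [smul_mul_assoc]; exact J.smul_mem r ha

/-- preimage of J under Δ as a two-sided ideal -/
def K : TwoSidedIdeal F :=
  TwoSidedIdeal.mk' {z | Δ z ∈ J}
    (by simp only [Set.mem_setOf_eq, map_zero]; exact J.zero_mem)
    (fun hx hy => by simp only [Set.mem_setOf_eq, map_add] at *; exact J.add_mem hx hy)
    (fun hx => by simp only [Set.mem_setOf_eq, map_neg] at *; exact J.neg_mem hx)
    (fun hy => by simp only [Set.mem_setOf_eq, map_mul] at *; exact mul_mem_J _ hy)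
    (fun hx => by simp only [Set.mem_setOf_eq, map_mul] at *; exact mem_J_mul _ hx)

lemma Δg1_mem : Δ ((b + t) ^ 2 - 1) ∈ J := by
  have e : Δ ((b + t) ^ 2 - 1) =
      (1 : F) ⊗ₜ[ℂ] (b * b + t * t - 1) + (b * b + t * t - 1) ⊗ₜ[ℂ] (t * t)
        + (b + t) ⊗ₜ[ℂ] (b * t + t * b) + (b * t + t * b) ⊗ₜ[ℂ] (t * t) := by
    simp only [map_sub, map_pow, map_add, map_one, map_mul, Δb, Δt, pow_two, mul_add, add_mul,
      Algebra.TensorProduct.tmul_mul_tmul, TensorProduct.tmul_add, TensorProduct.add_tmul,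
      TensorProduct.tmul_sub, TensorProduct.sub_tmul, one_mul, mul_one,
      Algebra.TensorProduct.one_def]
    abel
  rw [e]
  exact J.add_mem (J.add_mem (J.add_mem (right_mem_J _ c_mem) (left_mem_J c_mem _))
    (right_mem_J _ d_mem)) (left_mem_J d_mem _)

lemma Δg2_mem : Δ ((b - t) ^ 2 - 1) ∈ J := by
  have e : Δ ((b - t) ^ 2 - 1) =
      (1 : F) ⊗ₜ[ℂ] (b * b + t * t - 1) + (b * b + t * t - 1) ⊗ₜ[ℂ] (t * t)
        + (b - t) ⊗ₜ[ℂ] (b * t + t * b) - (b * t + t * b) ⊗ₜ[ℂ] (t * t) := by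
    simp only [map_sub, map_pow, map_add, map_one, map_mul, Δb, Δt, pow_two, mul_add, add_mul,
      mul_sub, sub_mul,
      Algebra.TensorProduct.tmul_mul_tmul, TensorProduct.tmul_add, TensorProduct.add_tmul,
      TensorProduct.tmul_sub, TensorProduct.sub_tmul, one_mul, mul_one,
      Algebra.TensorProduct.one_def]
    abel
  rw [e]
  exact J.sub_mem (J.add_mem (J.add_mem (right_mem_J _ c_mem) (left_mem_J c_mem _))
    (right_mem_J _ d_mem)) (left_mem_J d_mem _)

lemma ΔI_sub_J : ∀ z ∈ I, Δ z ∈ J := by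
  intro z hz
  have := TwoSidedIdeal.mem_span_iff.mp hz K (by
    rintro w (rfl | rfl)
    · exact (TwoSidedIdeal.mem_mk' _ _ _ _ _ _ _).mpr Δg1_mem
    · exact (TwoSidedIdeal.mem_mk' _ _ _ _ _ _ _).mpr Δg2_mem)
  unfold K at this
  have h2 := (TwoSidedIdeal.mem_mk' {z | Δ z ∈ J} _ _ _ _ _ z).mp this
  exact h2

lemma εI : ∀ z ∈ I, ε z = 0 := by
  intro z hz
  have := TwoSidedIdeal.mem_span_iff.mp hz (TwoSidedIdeal.ker ε) (by
    rintro w (rfl | rfl) <;>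
      simp [TwoSidedIdeal.mem_ker, εb, εt]) 
  exact (TwoSidedIdeal.mem_ker ε).mp this


lemma mkI : ∀ z ∈ I, RingQuot.mkAlgHom ℂ rel z = 0 := by
  intro z hz
  have := TwoSidedIdeal.mem_span_iff.mp hz (TwoSidedIdeal.ker (RingQuot.mkAlgHom ℂ rel)) (by
    rintro w (rfl | rfl)
    · rw [SetLike.mem_coe, TwoSidedIdeal.mem_ker, map_sub, map_one,
        RingQuot.mkAlgHom_rel ℂ (show rel ((b+t)^2) 1 from Or.inl ⟨rfl, rfl⟩), map_one, sub_self]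
    · rw [SetLike.mem_coe, TwoSidedIdeal.mem_ker, map_sub, map_one,
        RingQuot.mkAlgHom_rel ℂ (show rel ((b-t)^2) 1 from Or.inr ⟨rfl, rfl⟩), map_one, sub_self])
  exact (TwoSidedIdeal.mem_ker _).mp this

lemma hAm : bb * bb + tt * tt = 1 := by
  have := mkI _ c_mem
  rw [map_sub, map_add, map_mul, map_mul, map_one, sub_eq_zero] at this
  exact this

lemma hBm : bb * tt + tt * bb = 0 := by
  have := mkI _ d_mem
  rw [map_add, map_mul, map_mul] at this
  exact this

lemma J_killed : ∀ w ∈ J,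
    Algebra.TensorProduct.map (RingQuot.mkAlgHom ℂ rel) (RingQuot.mkAlgHom ℂ rel) w = 0 := by
  intro w hw
  induction hw using Submodule.span_induction with
  | mem z hz =>
    rcases hz with ⟨p, hp, q, rfl⟩ | ⟨p, q, hq, rfl⟩
    · rw [Algebra.TensorProduct.map_tmul, mkI _ hp, TensorProduct.zero_tmul]
    · rw [Algebra.TensorProduct.map_tmul, mkI _ hq, TensorProduct.tmul_zero]
  | zero => simp
  | add a c _ _ ha hc => rw [map_add, ha, hc, add_zero]
  | smul r a _ ha => rw [map_smul, ha, smul_zero]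

def Φ : F →ₐ[ℂ] M ⊗[ℂ] M :=
  (Algebra.TensorProduct.map (RingQuot.mkAlgHom ℂ rel) (RingQuot.mkAlgHom ℂ rel)).comp Δ

lemma Φrel : ∀ ⦃x y⦄, rel x y → Φ x = Φ y := by
  rintro x y (⟨rfl, rfl⟩ | ⟨rfl, rfl⟩)
  · have h : Φ ((b + t) ^ 2 - 1) = 0 := J_killed _ (ΔI_sub_J _ hg1)
    rwa [map_sub, sub_eq_zero] at h
  · have h : Φ ((b - t) ^ 2 - 1) = 0 := J_killed _ (ΔI_sub_J _ hg2)
    rwa [map_sub, sub_eq_zero] at h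

def Δ' : M →ₐ[ℂ] M ⊗[ℂ] M := RingQuot.liftAlgHom ℂ ⟨Φ, Φrel⟩

lemma Δ'tt : Δ' tt = tt ⊗ₜ[ℂ] tt := by
  rw [tt, Δ', RingQuot.liftAlgHom_mkAlgHom_apply]
  simp [Φ, Δt]

lemma Δ'bb : Δ' bb = 1 ⊗ₜ[ℂ] bb + bb ⊗ₜ[ℂ] tt := by
  rw [bb, Δ', RingQuot.liftAlgHom_mkAlgHom_apply]
  simp only [Φ, AlgHom.coe_comp, Function.comp_apply, Δb, map_add,
    Algebra.TensorProduct.map_tmul, map_one]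
  rfl

lemma εrel : ∀ ⦃x y⦄, rel x y → ε x = ε y := by
  rintro x y (⟨rfl, rfl⟩ | ⟨rfl, rfl⟩) <;>
    simp [map_pow, εb, εt]

def ε' : M →ₐ[ℂ] ℂ := RingQuot.liftAlgHom ℂ ⟨ε, εrel⟩

lemma ε'tt : ε' tt = 1 := by
  rw [tt, ε', RingQuot.liftAlgHom_mkAlgHom_apply, εt]
lemma ε'bb : ε' bb = 0 := by
  rw [bb, ε', RingQuot.liftAlgHom_mkAlgHom_apply, εb]

lemma Mext {N : Type} [Semiring N] [Algebra ℂ N] {f g : M →ₐ[ℂ] N}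
    (h1 : f bb = g bb) (h2 : f tt = g tt) : f = g := by
  refine RingQuot.ringQuot_ext' _ _ _ ?_
  apply FreeAlgebra.hom_ext
  funext i
  fin_cases i
  · exact h1
  · exact h2

lemma coassoc :
    (Algebra.TensorProduct.assoc ℂ ℂ ℂ M M M).toAlgHom.comp
        ((Algebra.TensorProduct.map Δ' (AlgHom.id ℂ M)).comp Δ')
      = (Algebra.TensorProduct.map (AlgHom.id ℂ M) Δ').comp Δ' := by
  refine Mext ?_ ?_ <;>
  · simp [Δ'bb, Δ'tt, TensorProduct.tmul_add, TensorProduct.add_tmul,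
      Algebra.TensorProduct.assoc_tmul, Algebra.TensorProduct.one_def]
    try abel

lemma counit_l :
    (Algebra.TensorProduct.lid ℂ M).toAlgHom.comp
        ((Algebra.TensorProduct.map ε' (AlgHom.id ℂ M)).comp Δ') = AlgHom.id ℂ M := by
  refine Mext ?_ ?_ <;>
    simp [Δ'bb, Δ'tt, ε'bb, ε'tt, TensorProduct.tmul_add, TensorProduct.add_tmul]

lemma counit_r :
    (Algebra.TensorProduct.rid ℂ ℂ M).toAlgHom.comp
        ((Algebra.TensorProduct.map (AlgHom.id ℂ M) ε').comp Δ') = AlgHom.id ℂ M := by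
  refine Mext ?_ ?_ <;>
    simp [Δ'bb, Δ'tt, ε'bb, ε'tt, TensorProduct.tmul_add, TensorProduct.add_tmul]

-- β
lemma hx2 : x * x = 1 := by
  rw [x, ← map_mul, ← map_one (Ideal.Quotient.mk _), ← sub_eq_zero, ← map_sub,
    Ideal.Quotient.eq_zero_iff_mem]
  exact Ideal.subset_span (by rw [← pow_two]; exact Set.mem_singleton _)

lemma hkey : ((1:A) ⊗ₜ[ℂ] bb + x ⊗ₜ[ℂ] tt) * ((1:A) ⊗ₜ[ℂ] bb + x ⊗ₜ[ℂ] tt) = 1 := by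
  have expand : ∀ p q r s : A ⊗[ℂ] M, (p + q) * (r + s) = p * r + p * s + (q * r + q * s) := by
    intro p q r s
    trans p * (r + s) + q * (r + s)
    · exact Distrib.right_distrib p q (r + s)
    · exact congrArg₂ (· + ·) (Distrib.left_distrib p r s) (Distrib.left_distrib q r s)
  rw [expand, Algebra.TensorProduct.tmul_mul_tmul, Algebra.TensorProduct.tmul_mul_tmul,
    Algebra.TensorProduct.tmul_mul_tmul, Algebra.TensorProduct.tmul_mul_tmul,
    one_mul, one_mul, mul_one, hx2,
    show (1:A) ⊗ₜ[ℂ] (bb * bb) + x ⊗ₜ[ℂ] (bb * tt) + (x ⊗ₜ[ℂ] (tt * bb) + (1:A) ⊗ₜ[ℂ] (tt * tt))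
      = ((1:A) ⊗ₜ[ℂ] (bb * bb) + (1:A) ⊗ₜ[ℂ] (tt * tt))
        + (x ⊗ₜ[ℂ] (bb * tt) + x ⊗ₜ[ℂ] (tt * bb)) from by abel,
    ← TensorProduct.tmul_add, ← TensorProduct.tmul_add,
    hAm, hBm, TensorProduct.tmul_zero, add_zero, Algebra.TensorProduct.one_def]

def P : Polynomial ℂ →ₐ[ℂ] A ⊗[ℂ] M := Polynomial.aeval ((1:A) ⊗ₜ[ℂ] bb + x ⊗ₜ[ℂ] tt)

lemma Pgen : P ((Polynomial.X : Polynomial ℂ) ^ 2 - 1) = 0 := by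
  rw [P, map_sub, Polynomial.aeval_X_pow, Polynomial.aeval_one, sub_eq_zero]
  exact (sq ((1:A) ⊗ₜ[ℂ] bb + x ⊗ₜ[ℂ] tt)).trans hkey

def β : A →ₐ[ℂ] A ⊗[ℂ] M :=
  Ideal.Quotient.liftₐ _ P (by
    intro a ha
    rw [Ideal.mem_span_singleton] at ha
    obtain ⟨c, rfl⟩ := ha
    rw [map_mul, Pgen]
    exact MulZeroClass.zero_mul (P c))

lemma βx : β x = 1 ⊗ₜ[ℂ] bb + x ⊗ₜ[ℂ] tt := by
  rw [x, β, Ideal.Quotient.liftₐ_apply]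
  exact Polynomial.aeval_X _

lemma Aext {N : Type} [Semiring N] [Algebra ℂ N] {f g : A →ₐ[ℂ] N}
    (h : f x = g x) : f = g := by
  apply Ideal.Quotient.algHom_ext
  apply Polynomial.algHom_ext
  exact h

lemma βcoassoc :
    (Algebra.TensorProduct.assoc ℂ ℂ ℂ A M M).toAlgHom.comp
        ((Algebra.TensorProduct.map β (AlgHom.id ℂ M)).comp β)
      = (Algebra.TensorProduct.map (AlgHom.id ℂ A) Δ').comp β := by
  refine Aext ?_
  have h1 : β 1 = 1 := β.map_one'
  simp only [AlgHom.coe_comp, AlgEquiv.toAlgHom_eq_coe, AlgHom.coe_coe, Function.comp_apply, h1, AlgEquiv.coe_algHom,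
    βx, Δ'bb, Δ'tt, map_add, Algebra.TensorProduct.map_tmul, AlgHom.coe_id, id_eq, map_one,
    Algebra.TensorProduct.one_def,
    Algebra.TensorProduct.assoc_tmul, TensorProduct.tmul_add, TensorProduct.add_tmul]
  abel

lemma βcounit :
    (Algebra.TensorProduct.rid ℂ ℂ A).toAlgHom.comp
        ((Algebra.TensorProduct.map (AlgHom.id ℂ A) ε').comp β) = AlgHom.id ℂ A := by
  refine Aext ?_
  simp [βx, ε'bb, ε'tt, TensorProduct.tmul_add, TensorProduct.add_tmul]


theorem comeasuring_of_Z2 :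
    -- Δ(I) ⊆ I ⊗ F + F ⊗ I and ε(I) = 0
    (∀ z ∈ I, Δ z ∈ J) ∧
    (∀ z ∈ I, ε z = 0) ∧
    -- the quotient M = F/I is a bialgebra
    (∃ (Δ' : M →ₐ[ℂ] M ⊗[ℂ] M) (ε' : M →ₐ[ℂ] ℂ),
      Δ' tt = tt ⊗ₜ[ℂ] tt ∧
      Δ' bb = 1 ⊗ₜ[ℂ] bb + bb ⊗ₜ[ℂ] tt ∧
      ε' tt = 1 ∧ ε' bb = 0 ∧
      (Algebra.TensorProduct.assoc ℂ ℂ ℂ M M M).toAlgHom.comp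
          ((Algebra.TensorProduct.map Δ' (AlgHom.id ℂ M)).comp Δ')
        = (Algebra.TensorProduct.map (AlgHom.id ℂ M) Δ').comp Δ' ∧
      (Algebra.TensorProduct.lid ℂ M).toAlgHom.comp
          ((Algebra.TensorProduct.map ε' (AlgHom.id ℂ M)).comp Δ') = AlgHom.id ℂ M ∧
      (Algebra.TensorProduct.rid ℂ ℂ M).toAlgHom.comp
          ((Algebra.TensorProduct.map (AlgHom.id ℂ M) ε').comp Δ') = AlgHom.id ℂ M ∧
      -- β : ℂ[x]/(x²−1) → (ℂ[x]/(x²−1)) ⊗ M is a unital algebra map and a coaction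
      ∃ β : A →ₐ[ℂ] A ⊗[ℂ] M,
        β x = 1 ⊗ₜ[ℂ] bb + x ⊗ₜ[ℂ] tt ∧
        (Algebra.TensorProduct.assoc ℂ ℂ ℂ A M M).toAlgHom.comp
            ((Algebra.TensorProduct.map β (AlgHom.id ℂ M)).comp β)
          = (Algebra.TensorProduct.map (AlgHom.id ℂ A) Δ').comp β ∧
        (Algebra.TensorProduct.rid ℂ ℂ A).toAlgHom.comp
            ((Algebra.TensorProduct.map (AlgHom.id ℂ A) ε').comp β) = AlgHom.id ℂ A) := by
  exact ⟨ΔI_sub_J, εI, Δ', ε', Δ'tt, Δ'bb, ε'tt, ε'bb, coassoc, counit_l, counit_r,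
    β, βx, βcoassoc, βcounit⟩

end Stmt8
end
end

section
/- Let Σ be a finite type and let F be the free ℂ-algebra on generators τ^i_j indexed by pairs (i,j) ∈ Σ × Σ. Let I be the two-sided ideal generated by the elements τ^k_i τ^k_j − δ_{ij} τ^k_i for all i, j, k ∈ Σ (so in the quotient each row (τ^k_j)_j is a family of mutually orthogonal idempotents). Let Δ : F → F ⊗ F and ε : F → ℂ be the unique algebra homomorphisms with Δ(τ^i_j) = Σ_{a∈Σ} τ^i_a ⊗ τ^a_j and ε(τ^i_j) = δ_{ij}. Then Δ(I) ⊆ I ⊗ F + F ⊗ I and ε(I) = 0, so M₁ = F/I is a ℂ-bialgebra; moreover the map β sending the delta-function δ_j ∈ ℂ^Σ to Σ_{i∈Σ} δ_i ⊗ τ^i_j is multiplicative, β(fg) = β(f)β(g) on basis elements, and satisfies (β ⊗ id)∘β = (id ⊗ Δ)∘β and (id ⊗ ε)∘β = id. (M₁ is the extended comeasuring bialgebra M₁(ℂ(Σ)) of the algebra of functions on the finite set Σ.) -/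
open scoped TensorProduct
set_option linter.unusedSectionVars false
set_option maxHeartbeats 1000000
set_option synthInstance.maxHeartbeats 400000

noncomputable section
namespace Stmt10

variable (S : Type) [Fintype S] [DecidableEq S]

/-- The free ℂ-algebra on the matrix of generators `τ^i_j`, `i, j ∈ Σ`. -/
abbrev F : Type := FreeAlgebra ℂ (S × S)

/-- The generator `τ^i_j`. -/
def τ (i j : S) : F S := FreeAlgebra.ι ℂ (i, j)

/-- The two-sided ideal generated by `τ^k_i τ^k_j − δ_{ij} τ^k_i`. -/
def I : TwoSidedIdeal (F S) :=
  TwoSidedIdeal.span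
    {x | ∃ i j k : S, x = τ S k i * τ S k j - (if i = j then τ S k i else 0)}

/-- The coproduct: the unique algebra map with `Δ(τ^i_j) = Σ_a τ^i_a ⊗ τ^a_j`. -/
def Δ : F S →ₐ[ℂ] F S ⊗[ℂ] F S :=
  FreeAlgebra.lift ℂ (fun p => ∑ a, τ S p.1 a ⊗ₜ[ℂ] τ S a p.2)

/-- The counit: the unique algebra map with `ε(τ^i_j) = δ_{ij}`. -/
def ε : F S →ₐ[ℂ] ℂ :=
  FreeAlgebra.lift ℂ (fun p => if p.1 = p.2 then (1 : ℂ) else 0)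

/-- The subspace `I ⊗ F + F ⊗ I` of `F ⊗ F`. -/
def J : Submodule ℂ (F S ⊗[ℂ] F S) :=
  Submodule.span ℂ
    ({z | ∃ x ∈ I S, ∃ y, z = x ⊗ₜ[ℂ] y} ∪ {z | ∃ x, ∃ y ∈ I S, z = x ⊗ₜ[ℂ] y})

/-- The relation whose `RingQuot` is `M₁ = F/I`. -/
def rel : F S → F S → Prop := fun x y =>
  ∃ i j k : S, x = τ S k i * τ S k j ∧ y = (if i = j then τ S k i else 0)

/-- The extended comeasuring bialgebra `M₁(ℂ(Σ))`. -/
abbrev M : Type := RingQuot (rel S)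

/-- The image of `τ^i_j` in `M₁`. -/
def u (i j : S) : M S := RingQuot.mkAlgHom ℂ (rel S) (τ S i j)

/-- The algebra of ℂ-valued functions on `Σ`. -/
abbrev A : Type := S → ℂ

/-- The delta-function basis `δ_i`. -/
def δ (i : S) : A S := Pi.single i 1

/-- The linear map `β : ℂ(Σ) → ℂ(Σ) ⊗ M₁` with `β(δ_j) = Σ_i δ_i ⊗ τ^i_j`. -/
def β : A S →ₗ[ℂ] A S ⊗[ℂ] M S :=
  ∑ j, ∑ i, LinearMap.smulRight (LinearMap.proj j : A S →ₗ[ℂ] ℂ) (δ S i ⊗ₜ[ℂ] u S i j)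


section Helpers
variable {S}

lemma tau_mul_mem_I (i j k : S) :
    τ S k i * τ S k j - (if i = j then τ S k i else 0) ∈ I S :=
  TwoSidedIdeal.subset_span ⟨i, j, k, rfl⟩

lemma Δ_τ (i j : S) : Δ S (τ S i j) = ∑ a, τ S i a ⊗ₜ[ℂ] τ S a j := by
  simp [Δ, τ, FreeAlgebra.lift_ι_apply]

lemma ε_τ (i j : S) : ε S (τ S i j) = if i = j then 1 else 0 := by
  simp [ε, τ, FreeAlgebra.lift_ι_apply]

lemma tmul_mem_J_left {x : F S} (hx : x ∈ I S) (y : F S) : x ⊗ₜ[ℂ] y ∈ J S :=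
  Submodule.subset_span (Or.inl ⟨x, hx, y, rfl⟩)

lemma tmul_mem_J_right (x : F S) {y : F S} (hy : y ∈ I S) : x ⊗ₜ[ℂ] y ∈ J S :=
  Submodule.subset_span (Or.inr ⟨x, y, hy, rfl⟩)

lemma J_mul_left (w : F S ⊗[ℂ] F S) {z : F S ⊗[ℂ] F S} (hz : z ∈ J S) : w * z ∈ J S := by
  refine Submodule.span_induction ?_ (by simpa using Submodule.zero_mem _) ?_ ?_ hz
  · rintro t (⟨x, hx, y, rfl⟩ | ⟨x, y, hy, rfl⟩)
    · induction w using TensorProduct.induction_on with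
      | zero => simpa using Submodule.zero_mem _
      | tmul a b =>
          rw [Algebra.TensorProduct.tmul_mul_tmul]
          exact tmul_mem_J_left ((I S).mul_mem_left a x hx) _
      | add a b ha hb => rw [add_mul]; exact Submodule.add_mem _ ha hb
    · induction w using TensorProduct.induction_on with
      | zero => simpa using Submodule.zero_mem _
      | tmul a b =>
          rw [Algebra.TensorProduct.tmul_mul_tmul]
          exact tmul_mem_J_right _ ((I S).mul_mem_left b y hy)
      | add a b ha hb => rw [add_mul]; exact Submodule.add_mem _ ha hb
  · intro a b _ _ ha hb; rw [mul_add]; exact Submodule.add_mem _ ha hb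
  · intro c a _ ha; rw [mul_smul_comm]; exact Submodule.smul_mem _ _ ha

lemma J_mul_right {z : F S ⊗[ℂ] F S} (hz : z ∈ J S) (w : F S ⊗[ℂ] F S) : z * w ∈ J S := by
  refine Submodule.span_induction ?_ (by simpa using Submodule.zero_mem _) ?_ ?_ hz
  · rintro t (⟨x, hx, y, rfl⟩ | ⟨x, y, hy, rfl⟩)
    · induction w using TensorProduct.induction_on with
      | zero => simpa using Submodule.zero_mem _
      | tmul a b =>
          rw [Algebra.TensorProduct.tmul_mul_tmul]
          exact tmul_mem_J_left ((I S).mul_mem_right x a hx) _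
      | add a b ha hb => rw [mul_add]; exact Submodule.add_mem _ ha hb
    · induction w using TensorProduct.induction_on with
      | zero => simpa using Submodule.zero_mem _
      | tmul a b =>
          rw [Algebra.TensorProduct.tmul_mul_tmul]
          exact tmul_mem_J_right _ ((I S).mul_mem_right y b hy)
      | add a b ha hb => rw [mul_add]; exact Submodule.add_mem _ ha hb
  · intro a b _ _ ha hb; rw [add_mul]; exact Submodule.add_mem _ ha hb
  · intro c a _ ha; rw [smul_mul_assoc]; exact Submodule.smul_mem _ _ ha

lemma Δ_gen_mem_J (i j k : S) :
    Δ S (τ S k i * τ S k j - (if i = j then τ S k i else 0)) ∈ J S := by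
  have key : Δ S (τ S k i * τ S k j - (if i = j then τ S k i else 0))
      = (∑ a, ∑ b, (τ S k a * τ S k b - (if a = b then τ S k a else 0)) ⊗ₜ[ℂ]
            (τ S a i * τ S b j))
        + ∑ a, τ S k a ⊗ₜ[ℂ] (τ S a i * τ S a j - (if i = j then τ S a i else 0)) := by
    rw [map_sub, map_mul, Δ_τ, Δ_τ, Finset.sum_mul_sum]
    simp only [Algebra.TensorProduct.tmul_mul_tmul, TensorProduct.sub_tmul,
      TensorProduct.tmul_sub, Finset.sum_sub_distrib, TensorProduct.ite_tmul, TensorProduct.tmul_ite,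
      Finset.sum_ite_eq, Finset.sum_ite_eq', Finset.mem_univ, if_true, apply_ite (Δ S), map_zero, Δ_τ]
    by_cases h : i = j <;> simp [h] <;> abel
  rw [key]
  refine Submodule.add_mem _ ?_ ?_
  · exact Submodule.sum_mem _ fun a _ => Submodule.sum_mem _ fun b _ =>
      tmul_mem_J_left (tau_mul_mem_I a b k) _
  · exact Submodule.sum_mem _ fun a _ => tmul_mem_J_right _ (tau_mul_mem_I i j a)

end Helpers


section Helpers2
variable {S}

lemma Δ_I_mem (z : F S) (hz : z ∈ I S) : Δ S z ∈ J S := by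
  have h := TwoSidedIdeal.mem_span_iff.mp hz
    (TwoSidedIdeal.mk' {z | Δ S z ∈ J S}
      (by simp only [Set.mem_setOf_eq, map_zero]; exact Submodule.zero_mem _)
      (fun {x y} hx hy => by
        simp only [Set.mem_setOf_eq, map_add] at *; exact Submodule.add_mem _ hx hy)
      (fun {x} hx => by
        simp only [Set.mem_setOf_eq, map_neg] at *; exact Submodule.neg_mem _ hx)
      (fun {x y} hy => by
        simp only [Set.mem_setOf_eq, map_mul] at *; exact J_mul_left _ hy)
      (fun {x y} hx => by
        simp only [Set.mem_setOf_eq, map_mul] at *; exact J_mul_right hx _))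
    (by rintro x ⟨i, j, k, rfl⟩
        simpa [TwoSidedIdeal.mem_mk'] using Δ_gen_mem_J i j k)
  simpa [TwoSidedIdeal.mem_mk'] using h

lemma ε_gen (i j k : S) :
    ε S (τ S k i * τ S k j - (if i = j then τ S k i else 0)) = 0 := by
  rw [map_sub, map_mul, ε_τ, ε_τ, apply_ite (ε S), map_zero, ε_τ]
  by_cases h : i = j
  · subst h; by_cases hk : k = i <;> simp [hk]
  · rcases eq_or_ne k i with heq | hk
    · subst heq; simp [h]
    · simp [h, hk]

lemma ε_I_mem (z : F S) (hz : z ∈ I S) : ε S z = 0 := by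
  have h := TwoSidedIdeal.mem_span_iff.mp hz
    (TwoSidedIdeal.mk' {z | ε S z = 0}
      (by simp)
      (fun {x y} hx hy => by
        simp only [Set.mem_setOf_eq, map_add] at *; rw [hx, hy, add_zero])
      (fun {x} hx => by
        simp only [Set.mem_setOf_eq, map_neg] at *; rw [hx, neg_zero])
      (fun {x y} hy => by
        simp only [Set.mem_setOf_eq, map_mul] at *; rw [hy, mul_zero])
      (fun {x y} hx => by
        simp only [Set.mem_setOf_eq, map_mul] at *; rw [hx, zero_mul]))
    (by rintro x ⟨i, j, k, rfl⟩
        simpa [TwoSidedIdeal.mem_mk'] using ε_gen i j k)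
  simpa [TwoSidedIdeal.mem_mk'] using h

lemma u_mul (k i j : S) : u S k i * u S k j = if i = j then u S k i else 0 := by
  have h := RingQuot.mkAlgHom_rel ℂ
    (show rel S (τ S k i * τ S k j) (if i = j then τ S k i else 0) from ⟨i, j, k, rfl, rfl⟩)
  rw [map_mul, apply_ite (RingQuot.mkAlgHom ℂ (rel S)), map_zero] at h
  exact h

/-- `Δ` followed by the double quotient map. -/
def Dm : F S →ₐ[ℂ] M S ⊗[ℂ] M S :=
  (Algebra.TensorProduct.map (RingQuot.mkAlgHom ℂ (rel S))
    (RingQuot.mkAlgHom ℂ (rel S))).comp (Δ S)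

lemma Dm_τ (i j : S) : Dm (τ S i j) = ∑ a, u S i a ⊗ₜ[ℂ] u S a j := by
  simp [Dm, Δ_τ, map_sum, u, Algebra.TensorProduct.map_tmul]

lemma Dm_rel : ∀ ⦃x y : F S⦄, rel S x y → Dm x = Dm y := by
  rintro x y ⟨i, j, k, rfl, rfl⟩
  rw [map_mul, Dm_τ, Dm_τ, Finset.sum_mul_sum, apply_ite Dm, map_zero, Dm_τ]
  by_cases h : i = j
  · subst h
    simp [Algebra.TensorProduct.tmul_mul_tmul, u_mul, TensorProduct.ite_tmul,
      Finset.sum_ite_eq, Finset.mem_univ]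
  · simp [Algebra.TensorProduct.tmul_mul_tmul, u_mul, TensorProduct.ite_tmul,
      TensorProduct.tmul_ite, Finset.sum_ite_eq, Finset.mem_univ, h]

lemma ε_rel : ∀ ⦃x y : F S⦄, rel S x y → ε S x = ε S y := by
  rintro x y ⟨i, j, k, rfl, rfl⟩
  have := ε_gen i j k
  rw [map_sub, sub_eq_zero] at this
  exact this

/-- The coproduct on `M`. -/
def Δq : M S →ₐ[ℂ] M S ⊗[ℂ] M S := RingQuot.liftAlgHom ℂ ⟨Dm, Dm_rel⟩

/-- The counit on `M`. -/
def εq : M S →ₐ[ℂ] ℂ := RingQuot.liftAlgHom ℂ ⟨ε S, ε_rel⟩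

lemma Δq_u (i j : S) : Δq (u S i j) = ∑ a, u S i a ⊗ₜ[ℂ] u S a j := by
  rw [u, Δq, RingQuot.liftAlgHom_mkAlgHom_apply, Dm_τ]

lemma εq_u (i j : S) : εq (u S i j) = if i = j then 1 else 0 := by
  rw [u, εq, RingQuot.liftAlgHom_mkAlgHom_apply, ε_τ]

lemma M_hom_ext {B : Type*} [Semiring B] [Algebra ℂ B] {f g : M S →ₐ[ℂ] B}
    (h : ∀ i j, f (u S i j) = g (u S i j)) : f = g := by
  apply RingQuot.ringQuot_ext'
  apply FreeAlgebra.hom_ext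
  funext p
  simpa [u, τ, Function.comp] using h p.1 p.2

lemma coassoc :
    (Algebra.TensorProduct.assoc ℂ ℂ ℂ (M S) (M S) (M S)).toAlgHom.comp
        ((Algebra.TensorProduct.map Δq (AlgHom.id ℂ (M S))).comp Δq)
      = (Algebra.TensorProduct.map (AlgHom.id ℂ (M S)) Δq).comp Δq := by
  apply M_hom_ext
  intro i j
  simp only [AlgHom.coe_comp, AlgEquiv.toAlgHom_eq_coe, AlgEquiv.coe_toAlgHom, AlgHom.coe_coe, Function.comp_apply,
    Δq_u, map_sum, Algebra.TensorProduct.map_tmul, AlgHom.coe_id, id_eq,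
    Algebra.TensorProduct.assoc_tmul, TensorProduct.sum_tmul, TensorProduct.tmul_sum]
  rw [Finset.sum_comm]

lemma counit_left :
    (Algebra.TensorProduct.lid ℂ (M S)).toAlgHom.comp
        ((Algebra.TensorProduct.map εq (AlgHom.id ℂ (M S))).comp Δq) = AlgHom.id ℂ (M S) := by
  apply M_hom_ext
  intro i j
  simp [Δq_u, εq_u, map_sum, TensorProduct.ite_tmul, Finset.sum_ite_eq, Finset.mem_univ]

lemma counit_right :
    (Algebra.TensorProduct.rid ℂ ℂ (M S)).toAlgHom.comp
        ((Algebra.TensorProduct.map (AlgHom.id ℂ (M S)) εq).comp Δq) = AlgHom.id ℂ (M S) := by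
  apply M_hom_ext
  intro i j
  simp [Δq_u, εq_u, map_sum, TensorProduct.tmul_ite, Finset.sum_ite_eq', Finset.mem_univ]

end Helpers2


section Helpers3
variable {S}

lemma β_apply (f : A S) : β S f = ∑ j, ∑ i, f j • (δ S i ⊗ₜ[ℂ] u S i j) := by
  simp [β, LinearMap.sum_apply, LinearMap.smulRight_apply, LinearMap.proj_apply]

lemma β_δ (k : S) : β S (δ S k) = ∑ i, δ S i ⊗ₜ[ℂ] u S i k := by
  rw [β_apply]
  simp [δ, Pi.single_apply, ite_smul, Finset.sum_ite_eq, Finset.sum_ite_eq']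

lemma δ_mul (i j : S) : δ S i * δ S j = if i = j then δ S i else 0 := by
  funext k
  rcases eq_or_ne i j with rfl | h
  · by_cases hk : k = i <;> simp [δ, Pi.mul_apply, Pi.single_apply, hk]
  · by_cases hk : k = i <;> simp [δ, Pi.mul_apply, Pi.single_apply, hk, h]

lemma β_mul (i j : S) : β S (δ S i * δ S j) = β S (δ S i) * β S (δ S j) := by
  rcases eq_or_ne i j with rfl | h
  · simp [δ_mul, Finset.sum_mul_sum, Algebra.TensorProduct.tmul_mul_tmul, u_mul,
      TensorProduct.ite_tmul, TensorProduct.tmul_ite, Finset.sum_ite_eq, β_δ]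
  · simp [δ_mul, h, Finset.sum_mul_sum, Algebra.TensorProduct.tmul_mul_tmul, u_mul,
      TensorProduct.ite_tmul, TensorProduct.tmul_ite, Finset.sum_ite_eq, β_δ]

lemma comod1 (f : A S) :
    (TensorProduct.assoc ℂ (A S) (M S) (M S))
        (TensorProduct.map (β S) LinearMap.id (β S f))
      = TensorProduct.map LinearMap.id Δq.toLinearMap (β S f) := by
  rw [β_apply]
  simp only [map_sum, map_smul, TensorProduct.map_tmul, LinearMap.id_coe, id_eq,
    β_δ, AlgHom.toLinearMap_apply, Δq_u, TensorProduct.sum_tmul, TensorProduct.tmul_sum,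
    TensorProduct.assoc_tmul, Finset.smul_sum]
  refine Finset.sum_congr rfl fun j _ => ?_
  rw [Finset.sum_comm]

lemma comod2 (f : A S) :
    (TensorProduct.rid ℂ (A S))
        (TensorProduct.map LinearMap.id εq.toLinearMap (β S f)) = f := by
  rw [β_apply]
  simp only [map_sum, map_smul, TensorProduct.map_tmul, LinearMap.id_coe, id_eq,
    AlgHom.toLinearMap_apply, εq_u, TensorProduct.tmul_ite, TensorProduct.tmul_zero,
    apply_ite (TensorProduct.rid ℂ (A S)), map_zero, TensorProduct.rid_tmul, one_smul,
    Finset.sum_ite_eq', Finset.mem_univ, if_true]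
  have : ∀ j, f j • δ S j = Pi.single j (f j) := by
    intro j
    funext k
    by_cases hk : k = j <;> simp [δ, Pi.single_apply, hk]
  simp only [smul_ite, smul_zero, Finset.sum_ite_eq', Finset.mem_univ, if_true, this]
  exact Finset.univ_sum_single f

end Helpers3

theorem comeasuring_of_finite_set :
    -- Δ(I) ⊆ I ⊗ F + F ⊗ I and ε(I) = 0
    (∀ z ∈ I S, Δ S z ∈ J S) ∧
    (∀ z ∈ I S, ε S z = 0) ∧
    -- M₁ = F/I is a bialgebra
    (∃ (Δ' : M S →ₐ[ℂ] M S ⊗[ℂ] M S) (ε' : M S →ₐ[ℂ] ℂ),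
      (∀ i j, Δ' (u S i j) = ∑ a, u S i a ⊗ₜ[ℂ] u S a j) ∧
      (∀ i j, ε' (u S i j) = if i = j then 1 else 0) ∧
      (Algebra.TensorProduct.assoc ℂ ℂ ℂ (M S) (M S) (M S)).toAlgHom.comp
          ((Algebra.TensorProduct.map Δ' (AlgHom.id ℂ (M S))).comp Δ')
        = (Algebra.TensorProduct.map (AlgHom.id ℂ (M S)) Δ').comp Δ' ∧
      (Algebra.TensorProduct.lid ℂ (M S)).toAlgHom.comp
          ((Algebra.TensorProduct.map ε' (AlgHom.id ℂ (M S))).comp Δ') = AlgHom.id ℂ (M S) ∧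
      (Algebra.TensorProduct.rid ℂ ℂ (M S)).toAlgHom.comp
          ((Algebra.TensorProduct.map (AlgHom.id ℂ (M S)) ε').comp Δ') = AlgHom.id ℂ (M S) ∧
      -- β is multiplicative on basis elements and a comodule structure
      (∀ i j : S, β S (δ S i * δ S j) = β S (δ S i) * β S (δ S j)) ∧
      (∀ f : A S,
        (TensorProduct.assoc ℂ (A S) (M S) (M S))
            (TensorProduct.map (β S) LinearMap.id (β S f))
          = TensorProduct.map LinearMap.id Δ'.toLinearMap (β S f)) ∧
      (∀ f : A S,
        (TensorProduct.rid ℂ (A S))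
            (TensorProduct.map LinearMap.id ε'.toLinearMap (β S f)) = f)) :=
  ⟨fun z hz => Δ_I_mem z hz, fun z hz => ε_I_mem z hz,
    Δq, εq, fun i j => Δq_u i j, fun i j => εq_u i j, coassoc, counit_left, counit_right,
    fun i j => β_mul i j, fun f => comod1 f, fun f => comod2 f⟩

end Stmt10
end
end

section
/- Let Σ be a finite type and E ⊆ {(i,j) ∈ Σ × Σ : i ≠ j} a subset (defining a differential calculus on ℂ(Σ)); write i−j when (i,j) ∈ E and i#j when i ≠ j and (i,j) ∉ E. Let M = M(ℂ(Σ)) be the quotient of the free ℂ-algebra on generators τ^i_j (i,j ∈ Σ) by the relations τ^k_i τ^k_j = δ_{ij} τ^k_i (all i,j,k) and Σ_j τ^i_j = 1 (all i), which is a bialgebra with Δ(τ^i_j) = Σ_a τ^i_a ⊗ τ^a_j and ε(τ^i_j) = δ_{ij}. Let J ⊆ M be the two-sided ideal generated by the elements τ^i_j τ^k_l for all i,j,k,l with i−k and j#l. Then Δ(J) ⊆ J ⊗ M + M ⊗ J and ε(J) = 0, so the quotient M/J is a bialgebra (the comeasuring bialgebra M(ℂ(Σ), Ω¹(ℂ(Σ)))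 preserving the differential calculus determined by E). -/
open scoped TensorProduct

noncomputable section
namespace Stmt14

variable (S : Type) [Fintype S] [DecidableEq S] (E : Set (S × S))

/-- The free ℂ-algebra on the matrix of generators `τ^i_j`. -/
abbrev F : Type := FreeAlgebra ℂ (S × S)

/-- The generator `τ^i_j`. -/
def τ (i j : S) : F S := FreeAlgebra.ι ℂ (i, j)

/-- The defining relations of `M(ℂ(Σ))` in the basepoint-free description:
`τ^k_i τ^k_j = δ_{ij} τ^k_i` and `Σ_j τ^i_j = 1`. -/
def rel : F S → F S → Prop := fun x y =>
  (∃ i j k : S, x = τ S k i * τ S k j ∧ y = (if i = j then τ S k i else 0))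
  ∨ (∃ i : S, x = ∑ j, τ S i j ∧ y = 1)

/-- The comeasuring bialgebra `M = M(ℂ(Σ))`. -/
abbrev M : Type := RingQuot (rel S)

/-- The image of `τ^i_j` in `M`. -/
def u (i j : S) : M S := RingQuot.mkAlgHom ℂ (rel S) (τ S i j)

/-- The two-sided ideal `J ⊆ M` generated by the `τ^i_j τ^k_l` with `i−k` and `j#l`,
i.e. `(i,k) ∈ E`, `j ≠ l` and `(j,l) ∉ E`. -/
def J : TwoSidedIdeal (M S) :=
  TwoSidedIdeal.span
    {x | ∃ i j k l : S, (i, k) ∈ E ∧ j ≠ l ∧ (j, l) ∉ E ∧ x = u S i j * u S k l}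

/-- The subspace `J ⊗ M + M ⊗ J` of `M ⊗ M`. -/
def JT : Submodule ℂ (M S ⊗[ℂ] M S) :=
  Submodule.span ℂ
    ({z | ∃ x ∈ J S E, ∃ y, z = x ⊗ₜ[ℂ] y} ∪ {z | ∃ x, ∃ y ∈ J S E, z = x ⊗ₜ[ℂ] y})

/-- The relations presenting the quotient `M/J`: those of `M` together with
`τ^i_j τ^k_l = 0` for `i−k`, `j#l`. -/
def rel₂ : F S → F S → Prop := fun x y =>
  rel S x y
  ∨ (∃ i j k l : S, (i, k) ∈ E ∧ j ≠ l ∧ (j, l) ∉ E ∧ x = τ S i j * τ S k l ∧ y = 0)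

/-- The comeasuring bialgebra with nonuniversal calculus, `M(ℂ(Σ), Ω¹(ℂ(Σ))) = M/J`. -/
abbrev N : Type := RingQuot (rel₂ S E)

/-- The image of `τ^i_j` in `M/J`. -/
def v (i j : S) : N S E := RingQuot.mkAlgHom ℂ (rel₂ S E) (τ S i j)

lemma u_mul (k i j : S) : u S k i * u S k j = if i = j then u S k i else 0 := by
  have h := RingQuot.mkAlgHom_rel ℂ
    (show rel S (τ S k i * τ S k j) (if i = j then τ S k i else 0) from Or.inl ⟨i, j, k, rfl, rfl⟩)
  simpa [u, map_mul, apply_ite (RingQuot.mkAlgHom ℂ (rel S))] using h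

lemma u_sum (i : S) : ∑ j, u S i j = 1 := by
  have h := RingQuot.mkAlgHom_rel ℂ
    (show rel S (∑ j, τ S i j) 1 from Or.inr ⟨i, rfl, rfl⟩)
  simpa [u, map_sum] using h

lemma v_mul (k i j : S) : v S E k i * v S E k j = if i = j then v S E k i else 0 := by
  have h := RingQuot.mkAlgHom_rel ℂ
    (show rel₂ S E (τ S k i * τ S k j) (if i = j then τ S k i else 0) from
      Or.inl (Or.inl ⟨i, j, k, rfl, rfl⟩))
  simpa [v, map_mul, apply_ite (RingQuot.mkAlgHom ℂ (rel₂ S E))] using h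

lemma v_sum (i : S) : ∑ j, v S E i j = 1 := by
  have h := RingQuot.mkAlgHom_rel ℂ
    (show rel₂ S E (∑ j, τ S i j) 1 from Or.inl (Or.inr ⟨i, rfl, rfl⟩))
  simpa [v, map_sum] using h

lemma v_zero {i j k l : S} (h1 : (i, k) ∈ E) (h2 : j ≠ l) (h3 : (j, l) ∉ E) :
    v S E i j * v S E k l = 0 := by
  have h := RingQuot.mkAlgHom_rel ℂ
    (show rel₂ S E (τ S i j * τ S k l) 0 from Or.inr ⟨i, j, k, l, h1, h2, h3, rfl, rfl⟩)
  simpa [v, map_mul] using h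

-- JT membership of pure tensors
lemma left_mem_JT {x : M S} (hx : x ∈ J S E) (y : M S) : x ⊗ₜ[ℂ] y ∈ JT S E :=
  Submodule.subset_span (Or.inl ⟨x, hx, y, rfl⟩)

lemma right_mem_JT (x : M S) {y : M S} (hy : y ∈ J S E) : x ⊗ₜ[ℂ] y ∈ JT S E :=
  Submodule.subset_span (Or.inr ⟨x, y, hy, rfl⟩)

lemma JT_mul_left (t : M S ⊗[ℂ] M S) {z : M S ⊗[ℂ] M S} (hz : z ∈ JT S E) :
    t * z ∈ JT S E := by
  induction hz using Submodule.span_induction with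
  | mem w hw =>
    induction t using TensorProduct.induction_on with
    | zero => simpa using (JT S E).zero_mem
    | tmul a b =>
      rcases hw with ⟨x, hx, y, rfl⟩ | ⟨x, y, hy, rfl⟩
      · simpa [Algebra.TensorProduct.tmul_mul_tmul] using
          left_mem_JT S E ((J S E).mul_mem_left a x hx) (b * y)
      · simpa [Algebra.TensorProduct.tmul_mul_tmul] using
          right_mem_JT S E (a * x) ((J S E).mul_mem_left b y hy)
    | add a b ha hb => simpa [add_mul] using (JT S E).add_mem ha hb
  | zero => simpa using (JT S E).zero_mem
  | add a b _ _ ha hb => simpa [mul_add] using (JT S E).add_mem ha hb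
  | smul c a _ ha => simpa [mul_smul_comm] using (JT S E).smul_mem c ha

lemma JT_mul_right {z : M S ⊗[ℂ] M S} (hz : z ∈ JT S E) (t : M S ⊗[ℂ] M S) :
    z * t ∈ JT S E := by
  induction hz using Submodule.span_induction with
  | mem w hw =>
    induction t using TensorProduct.induction_on with
    | zero => simpa using (JT S E).zero_mem
    | tmul a b =>
      rcases hw with ⟨x, hx, y, rfl⟩ | ⟨x, y, hy, rfl⟩
      · simpa [Algebra.TensorProduct.tmul_mul_tmul] using
          left_mem_JT S E ((J S E).mul_mem_right x a hx) (y * b)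
      · simpa [Algebra.TensorProduct.tmul_mul_tmul] using
          right_mem_JT S E (x * a) ((J S E).mul_mem_right y b hy)
    | add a b ha hb => simpa [mul_add] using (JT S E).add_mem ha hb
  | zero => simpa using (JT S E).zero_mem
  | add a b _ _ ha hb => simpa [add_mul] using (JT S E).add_mem ha hb
  | smul c a _ ha => simpa [smul_mul_assoc] using (JT S E).smul_mem c ha


lemma J_gen_mem {i j k l : S} (h1 : (i, k) ∈ E) (h2 : j ≠ l) (h3 : (j, l) ∉ E) :
    u S i j * u S k l ∈ J S E :=
  TwoSidedIdeal.subset_span ⟨i, j, k, l, h1, h2, h3, rfl⟩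

lemma part1 (Δ' : M S →ₐ[ℂ] M S ⊗[ℂ] M S) (ε' : M S →ₐ[ℂ] ℂ)
    (hΔ : ∀ i j, Δ' (u S i j) = ∑ a, u S i a ⊗ₜ[ℂ] u S a j)
    (hε : ∀ i j, ε' (u S i j) = if i = j then 1 else 0) :
    (∀ z ∈ J S E, Δ' z ∈ JT S E) ∧ (∀ z ∈ J S E, ε' z = 0) := by
  constructor
  · intro z hz
    let I : TwoSidedIdeal (M S) := TwoSidedIdeal.mk' {z | Δ' z ∈ JT S E}
      (by simp [(JT S E).zero_mem])
      (fun {x y} hx hy => by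
        simp only [Set.mem_setOf_eq, map_add] at hx hy ⊢; exact (JT S E).add_mem hx hy)
      (fun {x} hx => by
        simp only [Set.mem_setOf_eq] at hx ⊢; rw [← neg_one_smul ℂ x, map_smul]; exact (JT S E).smul_mem _ hx)
      (fun {x y} hy => by
        simp only [Set.mem_setOf_eq, map_mul] at hy ⊢; exact JT_mul_left S E _ hy)
      (fun {x y} hx => by
        simp only [Set.mem_setOf_eq, map_mul] at hx ⊢; exact JT_mul_right S E hx _)
    have key := TwoSidedIdeal.mem_span_iff.mp hz I ?_
    · simpa [I, TwoSidedIdeal.mem_mk'] using key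
    · rintro x ⟨i, j, k, l, h1, h2, h3, rfl⟩
      simp only [SetLike.mem_coe, I, TwoSidedIdeal.mem_mk', Set.mem_setOf_eq]
      rw [map_mul, hΔ, hΔ, Finset.sum_mul_sum]
      refine Submodule.sum_mem _ fun a _ => Submodule.sum_mem _ fun b _ => ?_
      rw [Algebra.TensorProduct.tmul_mul_tmul]
      by_cases hab : (a, b) ∈ E
      · exact right_mem_JT S E _ (J_gen_mem S E hab h2 h3)
      · by_cases hab2 : a = b
        · subst hab2
          rw [u_mul]
          simp [if_neg h2, (JT S E).zero_mem]
        · exact left_mem_JT S E (J_gen_mem S E h1 hab2 hab) _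
  · intro z hz
    have key := TwoSidedIdeal.mem_span_iff.mp hz (TwoSidedIdeal.ker ε') ?_
    · exact (TwoSidedIdeal.mem_ker ε').mp key
    · rintro x ⟨i, j, k, l, h1, h2, h3, rfl⟩
      simp only [SetLike.mem_coe, TwoSidedIdeal.mem_ker, map_mul, hε]
      rcases eq_or_ne i j with rfl | hij
      · rcases eq_or_ne k l with rfl | hkl
        · exact absurd h1 h3
        · simp [hkl]
      · simp [hij]


def D : F S →ₐ[ℂ] N S E ⊗[ℂ] N S E :=
  FreeAlgebra.lift ℂ fun p => ∑ a, v S E p.1 a ⊗ₜ[ℂ] v S E a p.2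

lemma D_τ (i j : S) : D S E (τ S i j) = ∑ a, v S E i a ⊗ₜ[ℂ] v S E a j := by
  simp [D, τ]

def Eps : F S →ₐ[ℂ] ℂ :=
  FreeAlgebra.lift ℂ fun p => if p.1 = p.2 then 1 else 0

lemma Eps_τ (i j : S) : Eps S (τ S i j) = if i = j then 1 else 0 := by
  simp [Eps, τ]

lemma D_resp : ∀ ⦃x y : F S⦄, rel₂ S E x y → D S E x = D S E y := by
  rintro x y ((⟨i, j, k, rfl, rfl⟩ | ⟨i, rfl, rfl⟩) | ⟨i, j, k, l, h1, h2, h3, rfl, rfl⟩)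
  · rw [map_mul, D_τ, D_τ, Finset.sum_mul_sum]
    simp only [Algebra.TensorProduct.tmul_mul_tmul, v_mul, TensorProduct.ite_tmul,
      Finset.sum_ite_eq, Finset.mem_univ, if_true]
    rcases eq_or_ne i j with rfl | hij
    · simp [D_τ]
    · simp [hij]
  · rw [map_sum, map_one]
    simp only [D_τ]
    rw [Finset.sum_comm]
    simp [← TensorProduct.tmul_sum, v_sum, ← TensorProduct.sum_tmul,
      Algebra.TensorProduct.one_def]
  · rw [map_mul, D_τ, D_τ, Finset.sum_mul_sum, map_zero]
    refine Finset.sum_eq_zero fun a _ => Finset.sum_eq_zero fun b _ => ?_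
    rw [Algebra.TensorProduct.tmul_mul_tmul]
    by_cases hab : (a, b) ∈ E
    · rw [v_zero S E hab h2 h3, TensorProduct.tmul_zero]
    · rcases eq_or_ne a b with rfl | hab2
      · rw [v_mul, if_neg h2, TensorProduct.tmul_zero]
      · rw [v_zero S E h1 hab2 hab, TensorProduct.zero_tmul]

lemma Eps_resp : ∀ ⦃x y : F S⦄, rel₂ S E x y → Eps S x = Eps S y := by
  rintro x y ((⟨i, j, k, rfl, rfl⟩ | ⟨i, rfl, rfl⟩) | ⟨i, j, k, l, h1, h2, h3, rfl, rfl⟩)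
  · rw [map_mul, Eps_τ, Eps_τ, apply_ite (Eps S), Eps_τ, map_zero]
    split_ifs <;> simp_all
  · rw [map_sum, map_one]
    simp [Eps_τ]
  · rw [map_mul, Eps_τ, Eps_τ, map_zero]
    rcases eq_or_ne i j with rfl | hij
    · rcases eq_or_ne k l with rfl | hkl
      · exact absurd h1 h3
      · simp [hkl]
    · simp [hij]

def Δ'' : N S E →ₐ[ℂ] N S E ⊗[ℂ] N S E :=
  RingQuot.liftAlgHom ℂ ⟨D S E, D_resp S E⟩

def ε'' : N S E →ₐ[ℂ] ℂ :=
  RingQuot.liftAlgHom ℂ ⟨Eps S, Eps_resp S E⟩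

lemma Δ''_v (i j : S) : Δ'' S E (v S E i j) = ∑ a, v S E i a ⊗ₜ[ℂ] v S E a j := by
  rw [v, Δ'', RingQuot.liftAlgHom_mkAlgHom_apply, D_τ]

lemma ε''_v (i j : S) : ε'' S E (v S E i j) = if i = j then 1 else 0 := by
  rw [v, ε'', RingQuot.liftAlgHom_mkAlgHom_apply, Eps_τ]

lemma gen_ext {B : Type*} [Semiring B] [Algebra ℂ B] (f g : N S E →ₐ[ℂ] B)
    (h : ∀ i j, f (v S E i j) = g (v S E i j)) : f = g := by
  refine RingQuot.ringQuot_ext' ℂ _ _ (FreeAlgebra.hom_ext (funext fun p => ?_))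
  exact h p.1 p.2


lemma coassoc :
    (Algebra.TensorProduct.assoc ℂ ℂ ℂ (N S E) (N S E) (N S E)).toAlgHom.comp
        ((Algebra.TensorProduct.map (Δ'' S E) (AlgHom.id ℂ (N S E))).comp (Δ'' S E))
      = (Algebra.TensorProduct.map (AlgHom.id ℂ (N S E)) (Δ'' S E)).comp (Δ'' S E) := by
  refine gen_ext S E _ _ fun i j => ?_
  simp only [AlgHom.coe_comp, AlgEquiv.toAlgHom_eq_coe, AlgHom.coe_coe, Function.comp_apply,
    Δ''_v, map_sum, Algebra.TensorProduct.map_tmul, AlgHom.coe_id, id_eq,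
    Algebra.TensorProduct.assoc_tmul, TensorProduct.sum_tmul, TensorProduct.tmul_sum]
  exact Finset.sum_comm

lemma counit_l :
    (Algebra.TensorProduct.lid ℂ (N S E)).toAlgHom.comp
        ((Algebra.TensorProduct.map (ε'' S E) (AlgHom.id ℂ (N S E))).comp (Δ'' S E))
      = AlgHom.id ℂ (N S E) := by
  refine gen_ext S E _ _ fun i j => ?_
  simp only [AlgHom.coe_comp, AlgEquiv.toAlgHom_eq_coe, AlgHom.coe_coe, Function.comp_apply,
    Δ''_v, map_sum, Algebra.TensorProduct.map_tmul, AlgHom.coe_id, id_eq, ε''_v,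
    Algebra.TensorProduct.lid_tmul, ite_smul, one_smul, zero_smul]
  simp

lemma counit_r :
    (Algebra.TensorProduct.rid ℂ ℂ (N S E)).toAlgHom.comp
        ((Algebra.TensorProduct.map (AlgHom.id ℂ (N S E)) (ε'' S E)).comp (Δ'' S E))
      = AlgHom.id ℂ (N S E) := by
  refine gen_ext S E _ _ fun i j => ?_
  simp only [AlgHom.coe_comp, AlgEquiv.toAlgHom_eq_coe, AlgHom.coe_coe, Function.comp_apply,
    Δ''_v, map_sum, Algebra.TensorProduct.map_tmul, AlgHom.coe_id, id_eq, ε''_v,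
    Algebra.TensorProduct.rid_tmul, ite_smul, one_smul, zero_smul]
  simp

theorem differential_calculus_biideal
    (hE : ∀ p ∈ E, p.1 ≠ p.2) :
    -- J is a bi-ideal: Δ(J) ⊆ J ⊗ M + M ⊗ J and ε(J) = 0
    (∀ (Δ' : M S →ₐ[ℂ] M S ⊗[ℂ] M S) (ε' : M S →ₐ[ℂ] ℂ),
      (∀ i j, Δ' (u S i j) = ∑ a, u S i a ⊗ₜ[ℂ] u S a j) →
      (∀ i j, ε' (u S i j) = if i = j then 1 else 0) →
      (∀ z ∈ J S E, Δ' z ∈ JT S E) ∧ (∀ z ∈ J S E, ε' z = 0)) ∧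
    -- hence the quotient M/J is a bialgebra
    (∃ (Δ'' : N S E →ₐ[ℂ] N S E ⊗[ℂ] N S E) (ε'' : N S E →ₐ[ℂ] ℂ),
      (∀ i j, Δ'' (v S E i j) = ∑ a, v S E i a ⊗ₜ[ℂ] v S E a j) ∧
      (∀ i j, ε'' (v S E i j) = if i = j then 1 else 0) ∧
      (Algebra.TensorProduct.assoc ℂ ℂ ℂ (N S E) (N S E) (N S E)).toAlgHom.comp
          ((Algebra.TensorProduct.map Δ'' (AlgHom.id ℂ (N S E))).comp Δ'')
        = (Algebra.TensorProduct.map (AlgHom.id ℂ (N S E)) Δ'').comp Δ'' ∧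
      (Algebra.TensorProduct.lid ℂ (N S E)).toAlgHom.comp
          ((Algebra.TensorProduct.map ε'' (AlgHom.id ℂ (N S E))).comp Δ'')
        = AlgHom.id ℂ (N S E) ∧
      (Algebra.TensorProduct.rid ℂ ℂ (N S E)).toAlgHom.comp
          ((Algebra.TensorProduct.map (AlgHom.id ℂ (N S E)) ε'').comp Δ'')
        = AlgHom.id ℂ (N S E)) := by
  refine ⟨fun Δ' ε' hΔ hε => part1 S E Δ' ε' hΔ hε,
    Δ'' S E, ε'' S E, Δ''_v S E, ε''_v S E, coassoc S E, counit_l S E, counit_r S E⟩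

end Stmt14
end
end

section
/- Let B be a unital ℂ-algebra, q ∈ ℂ, and s, t : ℕ × ℕ → B functions satisfying t *_q s = q·(s *_q t), where (f *_q g)(i,j) = Σ_{(a,b)+(c,d)=(i,j)} q^{bc} f(a,b) g(c,d) is the q-convolution. For k, l ∈ ℕ define T_{(k,l)} = s *_q ⋯ *_q s *_q t *_q ⋯ *_q t (the k-fold q-convolution power of s followed by the l-fold power of t, with T_{(0,0)} = δ the convolution unit). Then for all (i,j), (k,l) ∈ ℕ × ℕ: T_{(i,j)} *_q T_{(k,l)} = q^{jk}·T_{(i+k, j+l)}; explicitly, Σ_{(a,b)+(c,d)=(m,n)} q^{bc} T_{(i,j)}(a,b)·T_{(k,l)}(c,d) = q^{jk}·T_{(i+k,j+l)}(m,n) for all (m,n). (These are the defining relations of the comeasuring bialgebra M(ℂ_q²) of the quantum plane, verifying that the single relation t *_q s = q s *_q t generates all relations among the matrix generators t^{(m,n)}_{(i,j)} = T_{(i,j)}(m,n).) -/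
noncomputable section
namespace Stmt16

variable {B : Type*} [Ring B] [Algebra ℂ B]

/-- The q-convolution of functions `ℕ × ℕ → B`:
`(f *_q g)(i,j) = Σ_{(a,b)+(c,d)=(i,j)} q^{bc} f(a,b) g(c,d)`. -/
def qconv (q : ℂ) (f g : ℕ × ℕ → B) : ℕ × ℕ → B := fun x =>
  ∑ p ∈ Finset.HasAntidiagonal.antidiagonal x.1, ∑ r ∈ Finset.HasAntidiagonal.antidiagonal x.2,
    (q ^ (r.1 * p.2)) • (f (p.1, r.1) * g (p.2, r.2))

/-- The unit `δ` of the q-convolution. -/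
def δunit : ℕ × ℕ → B := fun x => if x = (0, 0) then 1 else 0

/-- The `n`-fold q-convolution power. -/
def qpow (q : ℂ) (f : ℕ × ℕ → B) : ℕ → (ℕ × ℕ → B)
  | 0 => δunit
  | n + 1 => qconv q f (qpow q f n)

/-- `T_{(k,l)} = s *_q ⋯ *_q s *_q t *_q ⋯ *_q t` (`k`-fold power of `s`, `l`-fold power
of `t`), the matrix generators of `M(ℂ_q²)`: `t^{(m,n)}_{(k,l)} = T_{(k,l)}(m,n)`. -/
def T (q : ℂ) (s t : ℕ × ℕ → B) (k l : ℕ) : ℕ × ℕ → B :=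
  qconv q (qpow q s k) (qpow q t l)

lemma sum3 {M : Type*} [AddCommMonoid M] (n : ℕ) (F : ℕ → ℕ → ℕ → M) :
    ∑ p ∈ Finset.HasAntidiagonal.antidiagonal n, ∑ u ∈ Finset.HasAntidiagonal.antidiagonal p.1, F u.1 u.2 p.2
    = ∑ p ∈ Finset.HasAntidiagonal.antidiagonal n, ∑ u ∈ Finset.HasAntidiagonal.antidiagonal p.2, F p.1 u.1 u.2 := by
  rw [Finset.sum_sigma', Finset.sum_sigma']
  refine Finset.sum_nbij' (fun x => ⟨(x.2.1, x.2.2 + x.1.2), (x.2.2, x.1.2)⟩)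
    (fun x => ⟨(x.1.1 + x.2.1, x.2.2), (x.1.1, x.2.1)⟩) ?_ ?_ ?_ ?_ ?_
  · rintro ⟨⟨p1, p2⟩, u1, u2⟩ ha
    simp only [Finset.mem_sigma, Finset.HasAntidiagonal.mem_antidiagonal, and_true] at ha ⊢; omega
  · rintro ⟨⟨p1, p2⟩, u1, u2⟩ ha
    simp only [Finset.mem_sigma, Finset.HasAntidiagonal.mem_antidiagonal, and_true] at ha ⊢; omega
  · rintro ⟨⟨p1, p2⟩, u1, u2⟩ ha
    simp only [Finset.mem_sigma, Finset.HasAntidiagonal.mem_antidiagonal] at ha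
    simp [ha.2]
  · rintro ⟨⟨p1, p2⟩, u1, u2⟩ ha
    simp only [Finset.mem_sigma, Finset.HasAntidiagonal.mem_antidiagonal] at ha
    simp [ha.2]
  · intro a ha; rfl

lemma qconv_delta_left (q : ℂ) (f : ℕ × ℕ → B) : qconv q δunit f = f := by
  funext x
  rw [qconv]
  rw [Finset.sum_eq_single_of_mem (0, x.1) (by simp)]
  · rw [Finset.sum_eq_single_of_mem (0, x.2) (by simp)]
    · simp [δunit]
    · intro r hr hne
      have : r.1 ≠ 0 := by
        simp only [Finset.HasAntidiagonal.mem_antidiagonal] at hr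
        rintro h0; exact hne (by obtain ⟨r1, r2⟩ := r; simp_all)
      simp [δunit, Prod.ext_iff, this]
  · intro p hp hne
    have : p.1 ≠ 0 := by
      simp only [Finset.HasAntidiagonal.mem_antidiagonal] at hp
      rintro h0; exact hne (by obtain ⟨p1, p2⟩ := p; simp_all)
    simp [δunit, Prod.ext_iff, this]

lemma qconv_delta_right (q : ℂ) (f : ℕ × ℕ → B) : qconv q f δunit = f := by
  funext x
  rw [qconv]
  rw [Finset.sum_eq_single_of_mem (x.1, 0) (by simp)]
  · rw [Finset.sum_eq_single_of_mem (x.2, 0) (by simp)]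
    · simp [δunit]
    · intro r hr hne
      have : r.2 ≠ 0 := by
        simp only [Finset.HasAntidiagonal.mem_antidiagonal] at hr
        rintro h0; exact hne (by obtain ⟨r1, r2⟩ := r; simp_all)
      simp [δunit, Prod.ext_iff, this]
  · intro p hp hne
    have : p.2 ≠ 0 := by
      simp only [Finset.HasAntidiagonal.mem_antidiagonal] at hp
      rintro h0; exact hne (by obtain ⟨p1, p2⟩ := p; simp_all)
    simp [δunit, Prod.ext_iff, this]

lemma qconv_smul_left (q c : ℂ) (f g : ℕ × ℕ → B) :
    qconv q (c • f) g = c • qconv q f g := by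
  funext x
  simp [qconv, Finset.smul_sum, smul_mul_assoc, smul_comm c]

lemma qconv_smul_right (q c : ℂ) (f g : ℕ × ℕ → B) :
    qconv q f (c • g) = c • qconv q f g := by
  funext x
  simp [qconv, Finset.smul_sum, mul_smul_comm, smul_comm c]

lemma qconv_assoc (q : ℂ) (f g h : ℕ × ℕ → B) :
    qconv q (qconv q f g) h = qconv q f (qconv q g h) := by
  funext x
  obtain ⟨m, n⟩ := x
  simp only [qconv, Finset.sum_mul, Finset.mul_sum, Finset.smul_sum, smul_mul_assoc,
    mul_smul_comm, smul_smul, ← pow_add, mul_assoc]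
  -- canonical form
  have key : (∑ p ∈ Finset.HasAntidiagonal.antidiagonal m, ∑ u ∈ Finset.HasAntidiagonal.antidiagonal p.1,
        ∑ r ∈ Finset.HasAntidiagonal.antidiagonal n, ∑ v ∈ Finset.HasAntidiagonal.antidiagonal r.1,
          (q ^ (v.1 * u.2 + v.1 * p.2 + v.2 * p.2)) •
            (f (u.1, v.1) * (g (u.2, v.2) * h (p.2, r.2))) : B)
      = ∑ p ∈ Finset.HasAntidiagonal.antidiagonal m, ∑ u ∈ Finset.HasAntidiagonal.antidiagonal p.2,
        ∑ r ∈ Finset.HasAntidiagonal.antidiagonal n, ∑ v ∈ Finset.HasAntidiagonal.antidiagonal r.2,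
          (q ^ (r.1 * u.1 + r.1 * u.2 + v.1 * u.2)) •
            (f (p.1, r.1) * (g (u.1, v.1) * h (u.2, v.2))) := by
    rw [sum3 m (fun a c e => ∑ r ∈ Finset.HasAntidiagonal.antidiagonal n, ∑ v ∈ Finset.HasAntidiagonal.antidiagonal r.1,
      (q ^ (v.1 * c + v.1 * e + v.2 * e)) • (f (a, v.1) * (g (c, v.2) * h (e, r.2))))]
    refine Finset.sum_congr rfl fun p _ => Finset.sum_congr rfl fun u _ => ?_
    exact sum3 n (fun b d fi =>
      (q ^ (b * u.1 + b * u.2 + d * u.2)) • (f (p.1, b) * (g (u.1, d) * h (u.2, fi))))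
  calc
    (∑ p ∈ Finset.HasAntidiagonal.antidiagonal m, ∑ r ∈ Finset.HasAntidiagonal.antidiagonal n,
        ∑ u ∈ Finset.HasAntidiagonal.antidiagonal p.1, ∑ v ∈ Finset.HasAntidiagonal.antidiagonal r.1,
          (q ^ (r.1 * p.2 + v.1 * u.2)) • (f (u.1, v.1) * (g (u.2, v.2) * h (p.2, r.2))) : B)
      = ∑ p ∈ Finset.HasAntidiagonal.antidiagonal m, ∑ u ∈ Finset.HasAntidiagonal.antidiagonal p.1,
        ∑ r ∈ Finset.HasAntidiagonal.antidiagonal n, ∑ v ∈ Finset.HasAntidiagonal.antidiagonal r.1,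
          (q ^ (v.1 * u.2 + v.1 * p.2 + v.2 * p.2)) •
            (f (u.1, v.1) * (g (u.2, v.2) * h (p.2, r.2))) := by
        refine Finset.sum_congr rfl fun p _ => ?_
        rw [Finset.sum_comm]
        refine Finset.sum_congr rfl fun u _ => Finset.sum_congr rfl fun r _ => ?_
        refine Finset.sum_congr rfl fun v hv => ?_
        have hv' := Finset.HasAntidiagonal.mem_antidiagonal.mp hv
        congr 1
        rw [← hv']; ring
    _ = ∑ p ∈ Finset.HasAntidiagonal.antidiagonal m, ∑ u ∈ Finset.HasAntidiagonal.antidiagonal p.2,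
        ∑ r ∈ Finset.HasAntidiagonal.antidiagonal n, ∑ v ∈ Finset.HasAntidiagonal.antidiagonal r.2,
          (q ^ (r.1 * u.1 + r.1 * u.2 + v.1 * u.2)) •
            (f (p.1, r.1) * (g (u.1, v.1) * h (u.2, v.2))) := key
    _ = ∑ p ∈ Finset.HasAntidiagonal.antidiagonal m, ∑ r ∈ Finset.HasAntidiagonal.antidiagonal n,
        ∑ u ∈ Finset.HasAntidiagonal.antidiagonal p.2, ∑ v ∈ Finset.HasAntidiagonal.antidiagonal r.2,
          (q ^ (r.1 * p.2 + v.1 * u.2)) • (f (p.1, r.1) * (g (u.1, v.1) * h (u.2, v.2))) := by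
        refine Finset.sum_congr rfl fun p _ => ?_
        rw [Finset.sum_comm]
        refine Finset.sum_congr rfl fun r _ => Finset.sum_congr rfl fun u hu => ?_
        refine Finset.sum_congr rfl fun v _ => ?_
        have hu' := Finset.HasAntidiagonal.mem_antidiagonal.mp hu
        congr 1
        rw [← hu']; ring

lemma qpow_add (q : ℂ) (f : ℕ × ℕ → B) (a b : ℕ) :
    qpow q f (a + b) = qconv q (qpow q f a) (qpow q f b) := by
  induction a with
  | zero => simp [qpow, qconv_delta_left]
  | succ a ih =>
      rw [Nat.add_right_comm]
      show qconv q f (qpow q f (a + b)) = qconv q (qconv q f (qpow q f a)) (qpow q f b)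
      rw [ih, qconv_assoc]

variable (q : ℂ) (s t : ℕ × ℕ → B)

lemma comm1 (hst : qconv q t s = q • qconv q s t) (k : ℕ) :
    qconv q t (qpow q s k) = (q ^ k) • qconv q (qpow q s k) t := by
  induction k with
  | zero => simp [qpow, qconv_delta_left, qconv_delta_right]
  | succ k ih =>
      rw [qpow, ← qconv_assoc, hst, qconv_smul_left, qconv_assoc, ih, qconv_smul_right,
        smul_smul, ← qconv_assoc, ← qpow, ← pow_succ']

lemma comm2 (hst : qconv q t s = q • qconv q s t) (j k : ℕ) :
    qconv q (qpow q t j) (qpow q s k) = (q ^ (j * k)) • qconv q (qpow q s k) (qpow q t j) := by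
  induction j with
  | zero => simp [qpow, qconv_delta_left, qconv_delta_right]
  | succ j ih =>
      rw [qpow, qconv_assoc, ih, qconv_smul_right, ← qconv_assoc, comm1 q s t hst,
        qconv_smul_left, smul_smul, qconv_assoc, ← qpow, ← pow_add]
      ring_nf

theorem quantum_plane_comeasuring_relations (q : ℂ) (s t : ℕ × ℕ → B)
    (hst : qconv q t s = q • qconv q s t) :
    ∀ i j k l : ℕ, qconv q (T q s t i j) (T q s t k l) = (q ^ (j * k)) • T q s t (i + k) (j + l) := by
  intro i j k l
  unfold T
  rw [qconv_assoc, ← qconv_assoc q (qpow q t j), comm2 q s t hst j k, qconv_smul_left,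
    qconv_smul_right, qconv_assoc, ← qconv_assoc q (qpow q s i), ← qpow_add, ← qpow_add]

end Stmt16
end
end

section
/- Let q ∈ ℂ with q ≠ 0 and q² ≠ −1, let B be a unital ℂ-algebra, and let a, b, c, d ∈ B. Define functions s, t, σ, τ : ℕ × ℕ → B supported on {(1,0),(0,1)} by s(1,0) = a, s(0,1) = c, t(1,0) = b, t(0,1) = d, σ(1,0) = a, σ(0,1) = b, τ(1,0) = c, τ(0,1) = d, and let (f *_q g)(i,j) = Σ_{(a',b')+(c',d')=(i,j)} q^{b'c'} f(a',b') g(c',d') denote the q-convolution. Then the two relations q·(s *_q t) = t *_q s and τ *_q σ = q·(σ *_q τ) hold simultaneously if and only if a, b, c, d satisfy the defining relations of the 2×2 quantum matrices M_q(2): ba = qab, ca = qac, db = qbd, dc = qcd, bc = cb, and ad − da = (q^{−1} − q)·bc. (This is the generator-level content of the identification of M₀(ℂ_q², Δ₊), the comeasuring bialgebra of the quantum plane respecting its braided addition law, with M_q(2).) -/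
noncomputable section
namespace Stmt17

variable {B : Type*} [Ring B] [Algebra ℂ B]

/-- The q-convolution of functions `ℕ × ℕ → B`:
`(f *_q g)(i,j) = Σ_{(a,b)+(c,d)=(i,j)} q^{bc} f(a,b) g(c,d)`. -/
def qconv (q : ℂ) (f g : ℕ × ℕ → B) : ℕ × ℕ → B := fun x =>
  ∑ p ∈ Finset.HasAntidiagonal.antidiagonal x.1, ∑ r ∈ Finset.HasAntidiagonal.antidiagonal x.2,
    (q ^ (r.1 * p.2)) • (f (p.1, r.1) * g (p.2, r.2))

/-- A function `ℕ × ℕ → B` supported on `{(1,0), (0,1)}` with the given two values. -/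
def gen (v10 v01 : B) : ℕ × ℕ → B := fun x =>
  if x = (1, 0) then v10 else if x = (0, 1) then v01 else 0


lemma qconv_gen_zero (q : ℂ) (u v w z : B) (i j : ℕ) (h : i + j ≠ 2) :
    qconv q (gen u v) (gen w z) (i, j) = 0 := by
  unfold qconv
  apply Finset.sum_eq_zero
  intro p hp
  apply Finset.sum_eq_zero
  intro r hr
  simp only [Finset.HasAntidiagonal.mem_antidiagonal] at hp hr
  simp only [gen, Prod.mk.injEq]
  split_ifs <;> first | rfl | (exfalso; omega) | simp

lemma qconv_gen (q : ℂ) (u v w z : B) :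
    qconv q (gen u v) (gen w z) = fun x =>
      if x = (2, 0) then u * w else if x = (1, 1) then u * z + q • (v * w)
      else if x = (0, 2) then v * z else 0 := by
  funext x
  obtain ⟨i, j⟩ := x
  simp only [Prod.mk.injEq]
  split_ifs with h1 h2 h3
  · obtain ⟨rfl, rfl⟩ := h1
    simp [qconv, gen, Finset.Nat.sum_antidiagonal_succ, Prod.ext_iff]
  · obtain ⟨rfl, rfl⟩ := h2
    simp [qconv, gen, Finset.Nat.sum_antidiagonal_succ, Prod.ext_iff]
    exact add_comm _ _
  · obtain ⟨rfl, rfl⟩ := h3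
    simp [qconv, gen, Finset.Nat.sum_antidiagonal_succ, Prod.ext_iff]
  · exact qconv_gen_zero q u v w z i j (by omega)

theorem quantum_matrices_from_coaddition (q : ℂ) (hq : q ≠ 0) (hq2 : q ^ 2 ≠ -1)
    (a b c d : B) :
    -- s(1,0)=a, s(0,1)=c, t(1,0)=b, t(0,1)=d, σ(1,0)=a, σ(0,1)=b, τ(1,0)=c, τ(0,1)=d
    ((q • qconv q (gen a c) (gen b d) = qconv q (gen b d) (gen a c) ∧
      qconv q (gen c d) (gen a b) = q • qconv q (gen a b) (gen c d))
    ↔ (b * a = q • (a * b) ∧ c * a = q • (a * c) ∧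
       d * b = q • (b * d) ∧ d * c = q • (c * d) ∧
       b * c = c * b ∧ a * d - d * a = (q⁻¹ - q) • (b * c))) := by
  rw [qconv_gen, qconv_gen, qconv_gen, qconv_gen]
  have hq21 : (q ^ 2 + 1 : ℂ) ≠ 0 := fun h => hq2 (by linear_combination h)
  have hsc : q * (q⁻¹ - q) = 1 - q ^ 2 := by field_simp
  constructor
  · rintro ⟨H1, H2⟩
    have e20 := congrFun H1 (2, 0)
    have e11 := congrFun H1 (1, 1)
    have e02 := congrFun H1 (0, 2)
    have f20 := congrFun H2 (2, 0)
    have f11 := congrFun H2 (1, 1)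
    have f02 := congrFun H2 (0, 2)
    simp only [Pi.smul_apply, Prod.mk.injEq] at e20 e11 e02 f20 f11 f02
    norm_num at e20 e11 e02 f20 f11 f02
    have hbc : b * c = c * b := by
      have key : (q ^ 2 + 1) • (b * c) = (q ^ 2 + 1) • (c * b) := by
        linear_combination (norm := module) -e11 - f11
      exact smul_right_injective B hq21 key
    have had : a * d - d * a = (q⁻¹ - q) • (b * c) := by
      have key : q • (a * d - d * a) = q • ((q⁻¹ - q) • (b * c)) := by
        rw [smul_smul, hsc]
        linear_combination (norm := module) e11 + (q ^ 2 : ℂ) • hbc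
      exact smul_right_injective B hq key
    exact ⟨e20.symm, f20, f02, e02.symm, hbc, had⟩
  · rintro ⟨h1, h2, h3, h4, h5, h6⟩
    have h6' : q • (a * d) - q • (d * a) = (1 - q ^ 2) • (b * c) := by
      rw [← smul_sub, h6, smul_smul, hsc]
    constructor <;> funext x <;> simp only [Pi.smul_apply] <;> split_ifs <;>
      first
        | (simp; done)
        | (rw [h1])
        | (rw [h4])
        | (rw [h2])
        | (rw [h3])
        | linear_combination (norm := module) h6' - (q ^ 2 : ℂ) • h5
        | linear_combination (norm := module) -h6' - h5

end Stmt17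
end
end
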